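/- arXiv:0908.1846 — 8 statements merged into one kernel-verified Lean document; each statement's English description precedes it below -/
import Mathlib

section
/- For a unit vector ψ ∈ H_A ⊗ H_B and 1 ≤ k ≤ d, the squared k-norm equals the maximal squared overlap with k-separable unit vectors: ‖ψ‖_k² = max { |⟨ψ, φ⟩|² : φ a unit vector with Schmidt rank at most k }. -/
open Matrix
open scoped BigOperators

noncomputable section

/-- Tensor product of two vectors. -/
def tensVec {a b : ℕ} (x : Fin a → ℂ) (y : Fin b → ℂ) : Fin a × Fin b → ℂ :=
  fun p => x p.1 * y p.2

/-- Rank-one operator |ψ⟩⟨ψ|. -/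
def ketbra {a b : ℕ} (ψ : Fin a × Fin b → ℂ) :
    Matrix (Fin a × Fin b) (Fin a × Fin b) ℂ :=
  Matrix.of fun p q => ψ p * star (ψ q)

/-- Inner product ⟨ψ, φ⟩ (conjugate-linear in the first argument). -/
def inn {a b : ℕ} (ψ φ : Fin a × Fin b → ℂ) : ℂ := ∑ p, star (ψ p) * φ p

/-- ψ is a unit vector. -/
def unitVec {a b : ℕ} (ψ : Fin a × Fin b → ℂ) : Prop := inn ψ ψ = 1

/-- Schmidt rank of a vector in the tensor product: the rank of the associated matrix. -/
def schmidtRank {a b : ℕ} (φ : Fin a × Fin b → ℂ) : ℕ :=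
  (Matrix.of fun i j => φ (i, j)).rank

/-- Real quadratic form ⟨φ|W|φ⟩ (real part). -/
def qform {a b : ℕ} (W : Matrix (Fin a × Fin b) (Fin a × Fin b) ℂ)
    (φ : Fin a × Fin b → ℂ) : ℝ :=
  (∑ p, ∑ q, star (φ p) * W p q * φ q).re

/-- Partial transpose on the second factor. -/
def partialTranspose {a b : ℕ} (M : Matrix (Fin a × Fin b) (Fin a × Fin b) ℂ) :
    Matrix (Fin a × Fin b) (Fin a × Fin b) ℂ :=
  Matrix.of fun p q => M (p.1, q.2) (q.1, p.2)

/-- (s, e, f) form a Schmidt decomposition of ψ with nonincreasing nonnegative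
Schmidt coefficients s and orthonormal families e, f. -/
def IsSchmidt {a b d : ℕ} (ψ : Fin a × Fin b → ℂ) (s : Fin d → ℝ)
    (e : Fin d → Fin a → ℂ) (f : Fin d → Fin b → ℂ) : Prop :=
  (∀ i j, ∑ p, star (e i p) * e j p = (if i = j then (1:ℂ) else 0)) ∧
  (∀ i j, ∑ p, star (f i p) * f j p = (if i = j then (1:ℂ) else 0)) ∧
  Antitone s ∧ (∀ j, 0 ≤ s j) ∧
  ψ = fun p => ∑ j, (s j : ℂ) * e j p.1 * f j p.2

/-- Squared k-norm of ψ, via the variational characterization: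
the supremum of squared overlaps with k-separable unit vectors. -/
def knormSq {a b : ℕ} (k : ℕ) (ψ : Fin a × Fin b → ℂ) : ℝ :=
  sSup { t : ℝ | ∃ φ : Fin a × Fin b → ℂ,
    unitVec φ ∧ schmidtRank φ ≤ k ∧ t = Complex.normSq (inn ψ φ) }

namespace Aux

lemma card_filter_lt {d k : ℕ} (hk : k ≤ d) :
    (Finset.univ.filter (fun j : Fin d => (j : ℕ) < k)).card = k := by
  have : Finset.univ.filter (fun j : Fin d => (j : ℕ) < k) =
      (Finset.range k).attachFin (fun m hm => lt_of_lt_of_le (Finset.mem_range.mp hm) hk) := by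
    ext j
    simp [Finset.mem_attachFin]
  rw [this, Finset.card_attachFin, Finset.card_range]

lemma rank_add_le {m n : Type*} [Fintype n] [Fintype m] (A B : Matrix m n ℂ) :
    (A + B).rank ≤ A.rank + B.rank := by
  rw [Matrix.rank, Matrix.rank, Matrix.rank, Matrix.mulVecLin_add]
  have h : LinearMap.range (A.mulVecLin + B.mulVecLin) ≤
      LinearMap.range A.mulVecLin ⊔ LinearMap.range B.mulVecLin := by
    rintro _ ⟨x, rfl⟩
    exact Submodule.add_mem_sup (LinearMap.mem_range_self _ x) (LinearMap.mem_range_self _ x)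
  exact (Submodule.finrank_mono h).trans
    (Submodule.finrank_add_le_finrank_add_finrank _ _)

lemma rank_sum_le {ι m n : Type*} [Fintype n] [Fintype m] (t : Finset ι)
    (M : ι → Matrix m n ℂ) : (∑ i ∈ t, M i).rank ≤ ∑ i ∈ t, (M i).rank := by
  induction t using Finset.cons_induction with
  | empty => simp
  | cons i t hi ih =>
      rw [Finset.sum_cons, Finset.sum_cons]
      exact (rank_add_le _ _).trans (Nat.add_le_add_left ih _)

lemma rank_vecMulVec_le {m n : Type*} [Fintype n] [Fintype m] (w : m → ℂ) (v : n → ℂ) :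
    (Matrix.vecMulVec w v).rank ≤ 1 := by
  rw [Matrix.vecMulVec_eq (Fin 1)]
  exact (Matrix.rank_mul_le_left _ _).trans
    ((Matrix.rank_le_card_width _).trans (by simp))

lemma sum_prod_factor {a b : ℕ} (u u' : Fin a → ℂ) (v v' : Fin b → ℂ) (A : ℂ) :
    (∑ p : Fin a × Fin b, A * ((star (u p.1) * u' p.1) * (star (v p.2) * v' p.2)))
      = A * ((∑ x, star (u x) * u' x) * (∑ y, star (v y) * v' y)) := by
  rw [Fintype.sum_prod_type, Finset.sum_mul_sum, Finset.mul_sum]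
  refine Finset.sum_congr rfl fun x _ => ?_
  rw [Finset.mul_sum]

lemma inn_superpos {a b d : ℕ} (e : Fin d → Fin a → ℂ) (f : Fin d → Fin b → ℂ)
    (he : ∀ i j, ∑ p, star (e i p) * e j p = (if i = j then (1:ℂ) else 0))
    (hf : ∀ i j, ∑ p, star (f i p) * f j p = (if i = j then (1:ℂ) else 0))
    (c c' : Fin d → ℂ) :
    (∑ p : Fin a × Fin b,
        star (∑ j, c j * e j p.1 * f j p.2) * (∑ j, c' j * e j p.1 * f j p.2))
      = ∑ j, star (c j) * c' j := by
  have expand : ∀ p : Fin a × Fin b,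
      star (∑ j, c j * e j p.1 * f j p.2) * (∑ l, c' l * e l p.1 * f l p.2)
        = ∑ j, ∑ l, (star (c j) * c' l) *
            ((star (e j p.1) * e l p.1) * (star (f j p.2) * f l p.2)) := by
    intro p
    rw [star_sum, Finset.sum_mul_sum]
    refine Finset.sum_congr rfl fun j _ => Finset.sum_congr rfl fun l _ => ?_
    simp only [star_mul']
    ring
  calc (∑ p : Fin a × Fin b,
        star (∑ j, c j * e j p.1 * f j p.2) * (∑ j, c' j * e j p.1 * f j p.2))
      = ∑ p : Fin a × Fin b, ∑ j, ∑ l, (star (c j) * c' l) *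
          ((star (e j p.1) * e l p.1) * (star (f j p.2) * f l p.2)) :=
        Finset.sum_congr rfl fun p _ => expand p
    _ = ∑ j, ∑ l, ∑ p : Fin a × Fin b, (star (c j) * c' l) *
          ((star (e j p.1) * e l p.1) * (star (f j p.2) * f l p.2)) := by
        rw [Finset.sum_comm]
        exact Finset.sum_congr rfl fun j _ => Finset.sum_comm
    _ = ∑ j, ∑ l, (star (c j) * c' l) *
          ((∑ x, star (e j x) * e l x) * (∑ y, star (f j y) * f l y)) :=
        Finset.sum_congr rfl fun j _ => Finset.sum_congr rfl fun l _ =>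
          sum_prod_factor _ _ _ _ _
    _ = ∑ j, star (c j) * c' j := by
        refine Finset.sum_congr rfl fun j _ => ?_
        rw [Finset.sum_eq_single j]
        · rw [he, hf]; simp
        · intro l _ hl
          rw [he, hf]; simp [Ne.symm hl]
        · simp

lemma inn_expand2 {a b d r : ℕ} (c : Fin d → ℂ) (u : Fin d → Fin a → ℂ)
    (v : Fin d → Fin b → ℂ) (c' : Fin r → ℂ) (u' : Fin r → Fin a → ℂ)
    (v' : Fin r → Fin b → ℂ) :
    (∑ p : Fin a × Fin b,
        star (∑ j, c j * u j p.1 * v j p.2) * (∑ l, c' l * u' l p.1 * v' l p.2))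
      = ∑ j, ∑ l, (star (c j) * c' l) *
          ((∑ x, star (u j x) * u' l x) * (∑ y, star (v j y) * v' l y)) := by
  calc (∑ p : Fin a × Fin b,
        star (∑ j, c j * u j p.1 * v j p.2) * (∑ l, c' l * u' l p.1 * v' l p.2))
      = ∑ p : Fin a × Fin b, ∑ j, ∑ l, (star (c j) * c' l) *
          ((star (u j p.1) * u' l p.1) * (star (v j p.2) * v' l p.2)) := by
        refine Finset.sum_congr rfl fun p _ => ?_
        rw [star_sum, Finset.sum_mul_sum]
        refine Finset.sum_congr rfl fun j _ => Finset.sum_congr rfl fun l _ => ?_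
        simp only [star_mul']
        ring
    _ = ∑ j, ∑ l, ∑ p : Fin a × Fin b, (star (c j) * c' l) *
          ((star (u j p.1) * u' l p.1) * (star (v j p.2) * v' l p.2)) := by
        rw [Finset.sum_comm]
        exact Finset.sum_congr rfl fun j _ => Finset.sum_comm
    _ = ∑ j, ∑ l, (star (c j) * c' l) *
          ((∑ x, star (u j x) * u' l x) * (∑ y, star (v j y) * v' l y)) :=
        Finset.sum_congr rfl fun j _ => Finset.sum_congr rfl fun l _ =>
          sum_prod_factor _ _ _ _ _

lemma dot_sum_right {n : Type*} [Fintype n] {r : ℕ} (u : n → ℂ) (A : Fin r → ℂ)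
    (Q : Fin r → n → ℂ) :
    ∑ x, star (u x) * (∑ m, A m * Q m x) = ∑ m, A m * (∑ x, star (u x) * Q m x) := by
  calc ∑ x, star (u x) * (∑ m, A m * Q m x)
      = ∑ x, ∑ m, A m * (star (u x) * Q m x) := by
        refine Finset.sum_congr rfl fun x _ => ?_
        rw [Finset.mul_sum]
        exact Finset.sum_congr rfl fun m _ => by ring
    _ = ∑ m, ∑ x, A m * (star (u x) * Q m x) := Finset.sum_comm
    _ = ∑ m, A m * (∑ x, star (u x) * Q m x) :=
        Finset.sum_congr rfl fun m _ => (Finset.mul_sum _ _ _).symm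

lemma dot_expand {n : Type*} [Fintype n] {r r' : ℕ} (A : Fin r → ℂ) (u : Fin r → n → ℂ)
    (A' : Fin r' → ℂ) (u' : Fin r' → n → ℂ) :
    ∑ x, star (∑ m, A m * u m x) * (∑ m', A' m' * u' m' x)
      = ∑ m, ∑ m', (star (A m) * A' m') * (∑ x, star (u m x) * u' m' x) := by
  calc ∑ x, star (∑ m, A m * u m x) * (∑ m', A' m' * u' m' x)
      = ∑ x, ∑ m, ∑ m', (star (A m) * A' m') * (star (u m x) * u' m' x) := by
        refine Finset.sum_congr rfl fun x _ => ?_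
        rw [star_sum, Finset.sum_mul_sum]
        refine Finset.sum_congr rfl fun m _ => Finset.sum_congr rfl fun m' _ => ?_
        simp only [star_mul']
        ring
    _ = ∑ m, ∑ m', ∑ x, (star (A m) * A' m') * (star (u m x) * u' m' x) := by
        rw [Finset.sum_comm]
        exact Finset.sum_congr rfl fun m _ => Finset.sum_comm
    _ = ∑ m, ∑ m', (star (A m) * A' m') * (∑ x, star (u m x) * u' m' x) :=
        Finset.sum_congr rfl fun m _ => Finset.sum_congr rfl fun m' _ =>
          (Finset.mul_sum _ _ _).symm

lemma inn_left_superpos {a b d : ℕ} (c : Fin d → ℂ) (u : Fin d → Fin a → ℂ)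
    (v : Fin d → Fin b → ℂ) (φ : Fin a × Fin b → ℂ) :
    ∑ p : Fin a × Fin b, star (∑ j, c j * u j p.1 * v j p.2) * φ p
      = ∑ j, star (c j) * ∑ y, star (v j y) * (∑ x, star (u j x) * φ (x, y)) := by
  calc ∑ p : Fin a × Fin b, star (∑ j, c j * u j p.1 * v j p.2) * φ p
      = ∑ p : Fin a × Fin b, ∑ j, star (c j) * (star (v j p.2) * (star (u j p.1) * φ p)) := by
        refine Finset.sum_congr rfl fun p _ => ?_
        rw [star_sum, Finset.sum_mul]
        refine Finset.sum_congr rfl fun j _ => ?_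
        simp only [star_mul']
        ring
    _ = ∑ j, ∑ p : Fin a × Fin b, star (c j) * (star (v j p.2) * (star (u j p.1) * φ p)) :=
        Finset.sum_comm
    _ = ∑ j, star (c j) * ∑ y, star (v j y) * (∑ x, star (u j x) * φ (x, y)) := by
        refine Finset.sum_congr rfl fun j _ => ?_
        rw [Fintype.sum_prod_type_right]
        simp only [Finset.mul_sum]

def toE {n : Type*} [Fintype n] (x : n → ℂ) : EuclideanSpace ℂ n := WithLp.toLp 2 x

lemma cs {a b : ℕ} (u v : Fin a × Fin b → ℂ) :
    Complex.normSq (∑ p, star (u p) * v p) ≤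
      (∑ p, star (u p) * u p).re * (∑ p, star (v p) * v p).re := by
  have key : ∀ x y : Fin a × Fin b → ℂ,
      (∑ p, star (x p) * y p) = (inner ℂ (toE x) (toE y) : ℂ) := by
    intro x y
    simp [toE, PiLp.inner_apply, RCLike.inner_apply, mul_comm]
  rw [key u v, key u u, key v v]
  set x : EuclideanSpace ℂ (Fin a × Fin b) := toE u
  set y : EuclideanSpace ℂ (Fin a × Fin b) := toE v
  have h1 : Complex.normSq (inner ℂ x y : ℂ) = ‖(inner ℂ x y : ℂ)‖ ^ 2 := by
    rw [Complex.normSq_eq_norm_sq]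
  rw [h1]
  have h2 : ‖(inner ℂ x y : ℂ)‖ ^ 2 ≤ (‖x‖ * ‖y‖) ^ 2 := by
    have := norm_inner_le_norm (𝕜 := ℂ) x y
    exact pow_le_pow_left₀ (norm_nonneg _) this 2
  refine h2.trans_eq ?_
  have h3 : ∀ z : EuclideanSpace ℂ (Fin a × Fin b), ‖z‖ ^ 2 = (inner ℂ z z : ℂ).re := by
    intro z
    rw [@norm_sq_eq_re_inner ℂ]
    rfl
  rw [mul_pow, h3, h3]

open Finset in
lemma kyfan {d k : ℕ} (hk1 : 1 ≤ k) (hk : k ≤ d) (s : Fin d → ℝ) (hmono : Antitone s)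
    (hpos : ∀ j, 0 ≤ s j) (c : Fin d → ℝ) (hc0 : ∀ j, 0 ≤ c j) (hc1 : ∀ j, c j ≤ 1)
    (hsum : ∑ j, c j ≤ (k : ℝ)) :
    ∑ j, s j ^ 2 * c j ≤ ∑ j ∈ univ.filter (fun j : Fin d => (j : ℕ) < k), s j ^ 2 := by
  classical
  set K := univ.filter (fun j : Fin d => (j : ℕ) < k) with hK
  have hkd : k - 1 < d := lt_of_lt_of_le (Nat.sub_lt hk1 one_pos) hk
  set j0 : Fin d := ⟨k - 1, hkd⟩ with hj0
  set t : ℝ := s j0 ^ 2 with ht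
  have hcardK : K.card = k := card_filter_lt hk
  -- split sum
  have hsplit : (∑ j, s j ^ 2 * c j) =
      ∑ j ∈ K, s j ^ 2 * c j + ∑ j ∈ Kᶜ, s j ^ 2 * c j := by
    rw [Finset.sum_add_sum_compl]
  have htle : ∀ j ∈ K, t ≤ s j ^ 2 := by
    intro j hj
    have hjk : (j : ℕ) < k := by simpa [hK] using hj
    have : s j0 ≤ s j := hmono (by simp [hj0, Fin.le_def]; omega)
    exact pow_le_pow_left₀ (hpos _) this 2
  have hget : ∀ j ∈ Kᶜ, s j ^ 2 ≤ t := by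
    intro j hj
    have hjk : ¬ (j : ℕ) < k := by simpa [hK] using hj
    have : s j ≤ s j0 := hmono (by simp [hj0, Fin.le_def]; omega)
    exact pow_le_pow_left₀ (hpos _) this 2
  have ht0 : 0 ≤ t := sq_nonneg _
  have h1 : ∑ j ∈ Kᶜ, s j ^ 2 * c j ≤ t * ∑ j ∈ Kᶜ, c j := by
    rw [Finset.mul_sum]
    exact Finset.sum_le_sum fun j hj => mul_le_mul_of_nonneg_right (hget j hj) (hc0 j)
  have h2 : ∑ j ∈ Kᶜ, c j ≤ (k : ℝ) - ∑ j ∈ K, c j := by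
    have := Finset.sum_add_sum_compl K c
    linarith
  have h3 : ∑ j ∈ Kᶜ, s j ^ 2 * c j ≤ t * ((k:ℝ) - ∑ j ∈ K, c j) :=
    h1.trans (mul_le_mul_of_nonneg_left h2 ht0)
  have h4 : t * ((k:ℝ) - ∑ j ∈ K, c j) = ∑ j ∈ K, t * (1 - c j) := by
    rw [Finset.sum_congr rfl (fun j _ => rfl)]
    rw [mul_sub, Finset.mul_sum]
    have : t * (k:ℝ) = ∑ _j ∈ K, t := by
      rw [Finset.sum_const, hcardK, nsmul_eq_mul, mul_comm]
    rw [this, ← Finset.sum_sub_distrib]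
    exact Finset.sum_congr rfl fun j _ => by ring
  have h5 : ∑ j ∈ K, (s j ^ 2 * c j + t * (1 - c j)) ≤ ∑ j ∈ K, s j ^ 2 := by
    refine Finset.sum_le_sum fun j hj => ?_
    have h6 : t * (1 - c j) ≤ s j ^ 2 * (1 - c j) :=
      mul_le_mul_of_nonneg_right (htle j hj) (by linarith [hc1 j])
    nlinarith [htle j hj, hc0 j, hc1 j]
  calc ∑ j, s j ^ 2 * c j
      = ∑ j ∈ K, s j ^ 2 * c j + ∑ j ∈ Kᶜ, s j ^ 2 * c j := hsplit
    _ ≤ ∑ j ∈ K, s j ^ 2 * c j + ∑ j ∈ K, t * (1 - c j) := by rw [← h4]; linarith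
    _ = ∑ j ∈ K, (s j ^ 2 * c j + t * (1 - c j)) := by rw [Finset.sum_add_distrib]
    _ ≤ ∑ j ∈ K, s j ^ 2 := h5


end Aux

/-- the squared k-norm equals the maximal squared overlap with
k-separable (Schmidt rank ≤ k) unit vectors. -/
theorem stmt1 {a b d k : ℕ} (hd : d = min a b) (hk1 : 1 ≤ k) (hk : k ≤ d)
    (ψ : Fin a × Fin b → ℂ) (hψ : unitVec ψ)
    (s : Fin d → ℝ) (e : Fin d → Fin a → ℂ) (f : Fin d → Fin b → ℂ)
    (hS : IsSchmidt ψ s e f) :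
    IsGreatest { t : ℝ | ∃ φ : Fin a × Fin b → ℂ,
        unitVec φ ∧ schmidtRank φ ≤ k ∧ t = Complex.normSq (inn ψ φ) }
      (∑ j ∈ Finset.univ.filter (fun j : Fin d => (j : ℕ) < k), s j ^ 2) := by
  classical
  obtain ⟨he, hf, hmono, hpos, hpsi⟩ := hS
  set K := Finset.univ.filter (fun j : Fin d => (j : ℕ) < k) with hK
  set T : ℝ := ∑ j ∈ K, s j ^ 2 with hT
  have hcardK : K.card = k := Aux.card_filter_lt hk
  -- norm of ψ is 1, i.e. ∑ s_j ^ 2 = 1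
  have hnorm : ∑ j, s j ^ 2 = 1 := by
    have h1 : inn ψ ψ = ∑ j, star ((s j : ℂ)) * (s j : ℂ) := by
      rw [hpsi]; exact Aux.inn_superpos e f he hf _ _
    rw [hψ] at h1
    have h2 : (∑ j, ((s j : ℂ)) * (s j : ℂ)) = 1 := by
      rw [h1]
      exact Finset.sum_congr rfl fun j _ => by rw [Complex.star_def, Complex.conj_ofReal]
    have h3 : ((∑ j, s j ^ 2 : ℝ) : ℂ) = 1 := by
      push_cast
      rw [← h2]
      exact Finset.sum_congr rfl fun j _ => by ring
    exact_mod_cast h3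
  have hd0 : 0 < d := lt_of_lt_of_le hk1 hk
  -- T > 0
  have hTnonneg : 0 ≤ T := Finset.sum_nonneg fun j _ => sq_nonneg _
  have hTpos : 0 < T := by
    rcases hTnonneg.lt_or_eq with h | h
    · exact h
    · exfalso
      have hz : ∀ j ∈ K, s j ^ 2 = 0 := by
        intro j hj
        exact (Finset.sum_eq_zero_iff_of_nonneg fun j _ => sq_nonneg _).mp h.symm j hj
      have hj0 : (⟨0, hd0⟩ : Fin d) ∈ K := by simp [hK]; omega
      have hs0 : s ⟨0, hd0⟩ = 0 := by
        have := hz _ hj0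
        exact pow_eq_zero_iff two_ne_zero |>.mp this
      have hall : ∀ j, s j = 0 := fun j =>
        le_antisymm ((hmono (show (⟨0, hd0⟩ : Fin d) ≤ j from Fin.mk_le_of_le_val (Nat.zero_le _))).trans_eq hs0) (hpos j)
      have : (∑ j, s j ^ 2) = 0 := Finset.sum_eq_zero fun j _ => by rw [hall j]; ring
      rw [this] at hnorm
      norm_num at hnorm
  have hrTpos : 0 < Real.sqrt T := Real.sqrt_pos.mpr hTpos
  set rT : ℝ := Real.sqrt T with hrT
  have hrT2 : rT * rT = T := Real.mul_self_sqrt hTnonneg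
  constructor
  · -- membership
    set c : Fin d → ℂ := fun j => (if (j:ℕ) < k then (s j : ℂ) else 0) / (rT : ℂ) with hc
    refine ⟨fun p => ∑ j, c j * e j p.1 * f j p.2, ?_, ?_, ?_⟩
    · show inn _ _ = 1
      have h1 : inn (fun p => ∑ j, c j * e j p.1 * f j p.2)
          (fun p => ∑ j, c j * e j p.1 * f j p.2) = ∑ j, star (c j) * c j :=
        Aux.inn_superpos e f he hf c c
      rw [h1]
      have h2 : ∀ j : Fin d, star (c j) * c j
          = (if (j:ℕ) < k then ((s j : ℂ))^2 else 0) / (T : ℂ) := by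
        intro j
        by_cases hj : (j:ℕ) < k
        · simp only [hc, hj, if_true]
          rw [star_div₀, Complex.star_def, Complex.conj_ofReal, Complex.conj_ofReal,
            div_mul_div_comm, ← hrT2]
          push_cast
          ring
        · simp [hc, hj]
      rw [Finset.sum_congr rfl fun j _ => h2 j, ← Finset.sum_div,
        ← Finset.sum_filter]
      have h3 : (∑ j ∈ K, ((s j : ℂ))^2) = (T : ℂ) := by
        rw [hT]
        push_cast
        rfl
      rw [h3, div_self]
      exact_mod_cast hTpos.ne'
    · show (Matrix.of fun i j => (∑ l, c l * e l i * f l j)).rank ≤ k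
      have hmat : (Matrix.of fun i j => (∑ l, c l * e l i * f l j)) =
          ∑ l ∈ K, Matrix.vecMulVec (fun x => c l * e l x) (f l) := by
        ext x y
        rw [Matrix.sum_apply]
        simp only [Matrix.of_apply, Matrix.vecMulVec_apply]
        refine (Finset.sum_subset (Finset.subset_univ K) ?_).symm
        intro l _ hl
        have : ¬ ((l:ℕ) < k) := by simpa [hK] using hl
        simp [hc, this]
      rw [hmat]
      calc (∑ l ∈ K, Matrix.vecMulVec (fun x => c l * e l x) (f l)).rank
          ≤ ∑ l ∈ K, (Matrix.vecMulVec (fun x => c l * e l x) (f l)).rank :=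
            Aux.rank_sum_le _ _
        _ ≤ ∑ _l ∈ K, 1 := Finset.sum_le_sum fun l _ => Aux.rank_vecMulVec_le _ _
        _ = k := by rw [Finset.sum_const, hcardK, smul_eq_mul, mul_one]
    · -- value
      have h1 : inn ψ (fun p => ∑ j, c j * e j p.1 * f j p.2)
          = ∑ j, star ((s j : ℂ)) * c j := by
        rw [hpsi]; exact Aux.inn_superpos e f he hf _ c
      have h2 : (∑ j, star ((s j : ℂ)) * c j) = ((rT : ℝ) : ℂ) := by
        have h4 : ∀ j : Fin d, star ((s j : ℂ)) * c j
            = (if (j:ℕ) < k then ((s j : ℂ))^2 else 0) / (rT : ℂ) := by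
          intro j
          by_cases hj : (j:ℕ) < k
          · simp only [hc, hj, if_true, Complex.star_def, Complex.conj_ofReal]
            ring
          · simp [hc, hj]
        rw [Finset.sum_congr rfl fun j _ => h4 j, ← Finset.sum_div, ← Finset.sum_filter]
        have h3 : (∑ j ∈ K, ((s j : ℂ))^2) = (T : ℂ) := by
          rw [hT]; push_cast; rfl
        rw [h3, ← hrT2]
        push_cast
        rw [mul_div_assoc, div_self (by exact_mod_cast hrTpos.ne'), mul_one]
      rw [h1, h2, Complex.normSq_ofReal, hrT2]
  · -- upper bound
    rintro t ⟨φ, hφu, hφr, rfl⟩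
    set M : Matrix (Fin a) (Fin b) ℂ := Matrix.of fun i j => φ (i, j) with hM
    have hMrank : M.rank ≤ k := hφr
    set Lm : (Fin a → ℂ) ≃ₗ[ℂ] EuclideanSpace ℂ (Fin a) :=
      (WithLp.linearEquiv 2 ℂ (Fin a → ℂ)).symm with hLmdef
    have hLm : ∀ (v : Fin a → ℂ) (z : Fin a), (Lm v) z = v z := fun _ _ => rfl
    set V : Submodule ℂ (EuclideanSpace ℂ (Fin a)) :=
      Submodule.map (Lm : (Fin a → ℂ) →ₗ[ℂ] EuclideanSpace ℂ (Fin a))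
        (LinearMap.range M.mulVecLin) with hV
    have hfinV : Module.finrank ℂ V = M.rank := by
      rw [hV, LinearEquiv.finrank_map_eq]
      rfl
    set r := Module.finrank ℂ V with hr
    have hrk : r ≤ k := hfinV.trans_le hMrank
    set B := stdOrthonormalBasis ℂ V with hBdef
    set Q : Fin r → EuclideanSpace ℂ (Fin a) := fun m => (B m : EuclideanSpace ℂ (Fin a))
      with hQdef
    have hQ : ∀ m m' : Fin r, (∑ z, star (Q m z) * Q m' z) = if m = m' then (1:ℂ) else 0 := by
      intro m m'
      have h1 := orthonormal_iff_ite.mp B.orthonormal m m'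
      rw [Submodule.coe_inner] at h1
      rw [← h1]
      simp [PiLp.inner_apply, RCLike.inner_apply, mul_comm]
      rfl
    have hcolmem : ∀ y : Fin b, Lm (fun x => φ (x, y)) ∈ V := by
      intro y
      have hc : M.mulVec (Pi.single y 1) = fun x => φ (x, y) := by
        funext x
        simp [hM, Matrix.mulVec_single]
      exact ⟨M.mulVec (Pi.single y 1), ⟨Pi.single y 1, rfl⟩, by rw [hc]; rfl⟩
    have hexp : ∀ (v : EuclideanSpace ℂ (Fin a)), v ∈ V →
        v = ∑ m, (inner ℂ (Q m) v : ℂ) • Q m := by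
      intro v hv
      have h1 := B.sum_repr ⟨v, hv⟩
      have h2 : ∀ m, B.repr ⟨v, hv⟩ m = (inner ℂ (Q m) v : ℂ) := by
        intro m
        rw [B.repr_apply_apply, Submodule.coe_inner]
      calc v = ((∑ m, B.repr ⟨v, hv⟩ m • B m : V) : EuclideanSpace ℂ (Fin a)) := by rw [h1]
        _ = ∑ m, (inner ℂ (Q m) v : ℂ) • Q m := by
            rw [Submodule.coe_sum]
            exact Finset.sum_congr rfl fun m _ => by rw [Submodule.coe_smul, h2]
    set coeff : Fin r → Fin b → ℂ := fun m y => ∑ z, star (Q m z) * φ (z, y) with hcoeff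
    have hφexp : ∀ x y, φ (x, y) = ∑ m, coeff m y * Q m x := by
      intro x y
      have h1 := hexp (Lm (fun x => φ (x, y))) (hcolmem y)
      have h2 : (Lm (fun x => φ (x, y))) x =
          (∑ m, (inner ℂ (Q m) (Lm (fun x => φ (x, y))) : ℂ) • Q m) x := by rw [← h1]
      rw [hLm] at h2
      have h3 : ∀ m, (inner ℂ (Q m) (Lm (fun x => φ (x, y))) : ℂ) = coeff m y := by
        intro m
        simp [hcoeff, PiLp.inner_apply, RCLike.inner_apply, mul_comm, hLm]
      rw [h2, WithLp.ofLp_sum, Finset.sum_apply]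
      refine Finset.sum_congr rfl fun m _ => ?_
      rw [PiLp.smul_apply, smul_eq_mul, h3]
    set w : Fin d → Fin r → ℂ := fun j m => ∑ z, star (Q m z) * e j z with hw
    set g : Fin d → Fin a → ℂ := fun j x => ∑ m, w j m * Q m x with hg
    set cc : Fin d → ℝ := fun j => ∑ m, Complex.normSq (w j m) with hcc
    have hstarw : ∀ j m, star (w j m) = ∑ x, star (e j x) * Q m x := by
      intro j m
      rw [hw]
      simp only [star_sum, star_mul', star_star]
      exact Finset.sum_congr rfl fun z _ => by ring
    have hkey : ∀ j y, (∑ x, star (e j x) * φ (x, y)) = ∑ x, star (g j x) * φ (x, y) := by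
      intro j y
      have hL : (∑ x, star (e j x) * φ (x, y)) = ∑ m, coeff m y * star (w j m) := by
        calc ∑ x, star (e j x) * φ (x, y)
            = ∑ x, star (e j x) * (∑ m, coeff m y * Q m x) :=
              Finset.sum_congr rfl fun x _ => by rw [← hφexp]
          _ = ∑ m, coeff m y * (∑ x, star (e j x) * Q m x) := Aux.dot_sum_right _ _ _
          _ = ∑ m, coeff m y * star (w j m) :=
              Finset.sum_congr rfl fun m _ => by rw [hstarw]
      have hR : (∑ x, star (g j x) * φ (x, y)) = ∑ m, (star (w j m) * coeff m y) * 1 := by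
        calc ∑ x, star (g j x) * φ (x, y)
            = ∑ x, star (∑ m, w j m * Q m x) * (∑ m', coeff m' y * Q m' x) :=
              Finset.sum_congr rfl fun x _ => by rw [← hφexp]
          _ = ∑ m, ∑ m', (star (w j m) * coeff m' y) * (∑ x, star (Q m x) * Q m' x) :=
              Aux.dot_expand _ _ _ _
          _ = ∑ m, (star (w j m) * coeff m y) * 1 := by
              refine Finset.sum_congr rfl fun m _ => ?_
              rw [Finset.sum_eq_single m]
              · rw [hQ]; simp
              · intro m' _ hm'
                rw [hQ]; simp [Ne.symm hm']
              · simp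
      rw [hL, hR]
      exact Finset.sum_congr rfl fun m _ => by ring
    set ψP : Fin a × Fin b → ℂ := fun p => ∑ j, (s j : ℂ) * g j p.1 * f j p.2 with hψPdef
    have hinn : ∀ u v : Fin a × Fin b → ℂ, inn u v = ∑ p, star (u p) * v p := fun _ _ => rfl
    have hA : inn ψ φ = inn ψP φ := by
      rw [hpsi, hψPdef, hinn, hinn]
      rw [Aux.inn_left_superpos, Aux.inn_left_superpos]
      refine Finset.sum_congr rfl fun j _ => ?_
      congr 1
      refine Finset.sum_congr rfl fun y _ => ?_
      rw [hkey]
    have hdiagg : ∀ j, (∑ x, star (g j x) * g j x) = ((cc j : ℝ) : ℂ) := by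
      intro j
      calc ∑ x, star (∑ m, w j m * Q m x) * (∑ m', w j m' * Q m' x)
          = ∑ m, ∑ m', (star (w j m) * w j m') * (∑ x, star (Q m x) * Q m' x) :=
            Aux.dot_expand _ _ _ _
        _ = ∑ m, (star (w j m) * w j m) * 1 := by
            refine Finset.sum_congr rfl fun m _ => ?_
            rw [Finset.sum_eq_single m]
            · rw [hQ]; simp
            · intro m' _ hm'
              rw [hQ]; simp [Ne.symm hm']
            · simp
        _ = ((cc j : ℝ) : ℂ) := by
            rw [hcc]
            push_cast
            refine Finset.sum_congr rfl fun m _ => ?_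
            rw [mul_one, Complex.star_def, ← Complex.normSq_eq_conj_mul_self]
    have hB2 : inn ψP ψP = ((∑ j, s j ^ 2 * cc j : ℝ) : ℂ) := by
      rw [hψPdef, hinn, Aux.inn_expand2]
      push_cast
      rw [Finset.sum_congr rfl (fun j _ => Finset.sum_eq_single j
        (fun l _ hl => by rw [hf]; simp [Ne.symm hl])
        (by simp))]
      refine Finset.sum_congr rfl fun j _ => ?_
      rw [hf, hdiagg]
      simp only [if_pos rfl, mul_one, Complex.star_def, Complex.conj_ofReal]
      push_cast
      ring
    have hφ1 : (inn φ φ).re = 1 := by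
      rw [hφu]
      rfl
    have hCS : Complex.normSq (inn ψP φ) ≤ ∑ j, s j ^ 2 * cc j := by
      have h := Aux.cs ψP φ
      rw [← hinn, ← hinn, ← hinn] at h
      rw [hφ1, mul_one, hB2, Complex.ofReal_re] at h
      exact h
    -- Bessel bounds on cc
    have hcc0 : ∀ j, 0 ≤ cc j := fun j => Finset.sum_nonneg fun m _ => Complex.normSq_nonneg _
    have hQinner : ∀ m m' : Fin r, (inner ℂ (Q m) (Q m') : ℂ) = ∑ z, star (Q m z) * Q m' z := by
      intro m m'
      simp [PiLp.inner_apply, RCLike.inner_apply, mul_comm]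
    have hQorth : Orthonormal ℂ Q := orthonormal_iff_ite.mpr fun m m' => by
      rw [hQinner, hQ]
    set eE : Fin d → EuclideanSpace ℂ (Fin a) := fun j => Lm (e j) with heE
    have heinner : ∀ i j : Fin d, (inner ℂ (eE i) (eE j) : ℂ) = ∑ z, star (e i z) * e j z := by
      intro i j
      simp [heE, PiLp.inner_apply, RCLike.inner_apply, mul_comm, hLm]
    have heorth : Orthonormal ℂ eE := orthonormal_iff_ite.mpr fun i j => by
      rw [heinner, he]
    have hnorme : ∀ j, ‖eE j‖ ^ 2 = 1 := by
      intro j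
      rw [@norm_sq_eq_re_inner ℂ]
      have : (inner ℂ (eE j) (eE j) : ℂ) = 1 := by rw [heinner, he]; simp
      rw [this]
      rfl
    have hnormQ : ∀ m, ‖Q m‖ ^ 2 = 1 := by
      intro m
      rw [@norm_sq_eq_re_inner ℂ]
      have : (inner ℂ (Q m) (Q m) : ℂ) = 1 := by rw [hQinner, hQ]; simp
      rw [this]
      rfl
    have hwinner : ∀ j m, w j m = (inner ℂ (Q m) (eE j) : ℂ) := by
      intro j m
      rw [hw]
      simp [heE, PiLp.inner_apply, RCLike.inner_apply, mul_comm, hLm]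
    have hcc1 : ∀ j, cc j ≤ 1 := by
      intro j
      have h := hQorth.sum_inner_products_le (eE j) (s := Finset.univ)
      calc cc j = ∑ m, ‖(inner ℂ (Q m) (eE j) : ℂ)‖ ^ 2 := by
            refine Finset.sum_congr rfl fun m _ => ?_
            rw [← hwinner, Complex.normSq_eq_norm_sq]
        _ ≤ ‖eE j‖ ^ 2 := h
        _ = 1 := hnorme j
    have hccsum : ∑ j, cc j ≤ (k : ℝ) := by
      have h0 : ∀ j m, Complex.normSq (w j m) = ‖(inner ℂ (eE j) (Q m) : ℂ)‖ ^ 2 := by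
        intro j m
        rw [← inner_conj_symm, ← hwinner, RCLike.norm_conj, Complex.normSq_eq_norm_sq]
      have h1 : ∑ j, cc j = ∑ m, ∑ j, ‖(inner ℂ (eE j) (Q m) : ℂ)‖ ^ 2 := by
        calc ∑ j, cc j = ∑ j, ∑ m, ‖(inner ℂ (eE j) (Q m) : ℂ)‖ ^ 2 := by
              simp only [hcc]
              exact Finset.sum_congr rfl fun j _ => Finset.sum_congr rfl fun m _ => h0 j m
          _ = ∑ m, ∑ j, ‖(inner ℂ (eE j) (Q m) : ℂ)‖ ^ 2 := Finset.sum_comm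
      rw [h1]
      calc ∑ m, ∑ j, ‖(inner ℂ (eE j) (Q m) : ℂ)‖ ^ 2
          ≤ ∑ m : Fin r, (1 : ℝ) := by
            refine Finset.sum_le_sum fun m _ => ?_
            exact (heorth.sum_inner_products_le (Q m) (s := Finset.univ)).trans_eq (hnormQ m)
        _ = (r : ℝ) := by simp
        _ ≤ (k : ℝ) := by exact_mod_cast hrk
    calc Complex.normSq (inn ψ φ)
        = Complex.normSq (inn ψP φ) := by rw [hA]
      _ ≤ ∑ j, s j ^ 2 * cc j := hCS
      _ ≤ ∑ j ∈ K, s j ^ 2 := Aux.kyfan hk1 hk s hmono hpos cc hcc0 hcc1 hccsum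
end
end

section
/- Let {ψ_α}_{α=1}^D be an orthonormal basis of H_A ⊗ H_B (D = d_A d_B), P_α = |ψ_α⟩⟨ψ_α|, let λ_1,…,λ_D ≥ 0 with λ_α > 0 for α > L, and suppose Σ_{α=1}^L ‖ψ_α‖_k² < 1. Define μ_k = (Σ_{α=1}^L λ_α ‖ψ_α‖_k²)/(1 − Σ_{α=1}^L ‖ψ_α‖_k²) and W = Σ_{α=L+1}^D λ_α P_α − Σ_{α=1}^L λ_α P_α. If λ_α ≥ μ_k for all α = L+1,…,D, then ⟨φ|W|φ⟩ ≥ 0 for every unit vector φ with Schmidt rank at most k, i.e. W is a k-entanglement witness candidate. -/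
open Matrix
open scoped BigOperators

noncomputable section

open scoped InnerProductSpace

/-- inn agrees with the Euclidean inner product. -/
lemma inn_eq_inner {a b : ℕ} (x y : Fin a × Fin b → ℂ) :
    inn x y = ⟪(WithLp.toLp 2 (x) : EuclideanSpace ℂ (Fin a × Fin b)),
               (WithLp.toLp 2 (y) : EuclideanSpace ℂ (Fin a × Fin b))⟫_ℂ := by
  simp [inn, PiLp.inner_apply, RCLike.inner_apply, mul_comm]

lemma norm_one_of_unit {a b : ℕ} {x : Fin a × Fin b → ℂ} (hx : unitVec x) :
    ‖(WithLp.toLp 2 (x) : EuclideanSpace ℂ (Fin a × Fin b))‖ = 1 := by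
  have h := hx
  rw [unitVec, inn_eq_inner] at h
  rw [inner_self_eq_norm_sq_to_K] at h
  have h2 : ‖(WithLp.toLp 2 (x) : EuclideanSpace ℂ (Fin a × Fin b))‖ ^ 2 = 1 := by
    have h' : ((‖(WithLp.toLp 2 (x) : EuclideanSpace ℂ (Fin a × Fin b))‖ ^ 2 : ℝ) : ℂ)
        = ((1 : ℝ) : ℂ) := by push_cast; exact h
    exact Complex.ofReal_injective h'
  nlinarith [norm_nonneg (WithLp.toLp 2 (x) : EuclideanSpace ℂ (Fin a × Fin b))]

/-- The set defining knormSq is bounded above by 1. -/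
lemma knorm_bdd {a b k : ℕ} (ψ : Fin a × Fin b → ℂ) (hψ : unitVec ψ) :
    ∀ t ∈ { t : ℝ | ∃ φ : Fin a × Fin b → ℂ,
      unitVec φ ∧ schmidtRank φ ≤ k ∧ t = Complex.normSq (inn ψ φ) }, t ≤ 1 := by
  rintro t ⟨φ, h1, _, rfl⟩
  rw [inn_eq_inner]
  have hb := norm_inner_le_norm (𝕜 := ℂ)
    (WithLp.toLp 2 (ψ) : EuclideanSpace ℂ (Fin a × Fin b))
    (WithLp.toLp 2 (φ) : EuclideanSpace ℂ (Fin a × Fin b))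
  rw [norm_one_of_unit hψ, norm_one_of_unit h1, one_mul] at hb
  have := Complex.normSq_eq_norm_sq (⟪(WithLp.toLp 2 (ψ) : EuclideanSpace ℂ (Fin a × Fin b)),
               (WithLp.toLp 2 (φ) : EuclideanSpace ℂ (Fin a × Fin b))⟫_ℂ)
  rw [this]
  nlinarith [norm_nonneg (⟪(WithLp.toLp 2 (ψ) : EuclideanSpace ℂ (Fin a × Fin b)),
               (WithLp.toLp 2 (φ) : EuclideanSpace ℂ (Fin a × Fin b))⟫_ℂ)]


/-- the spectral construction yields a k-EW candidate:
if λ_α ≥ μ_k for all α > L then ⟨φ|W|φ⟩ ≥ 0 for every unit φ with SR(φ) ≤ k. -/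
theorem stmt3 {a b k L : ℕ} (hk : 1 ≤ k)
    (ψ : Fin (a * b) → Fin a × Fin b → ℂ)
    (hON : ∀ α β, ∑ p, star (ψ α p) * ψ β p = (if α = β then (1:ℂ) else 0))
    (lam : Fin (a * b) → ℝ) (hlam0 : ∀ α, 0 ≤ lam α)
    (hlampos : ∀ α : Fin (a * b), L ≤ (α : ℕ) → 0 < lam α)
    (hL0 : 0 < L) (hL : L < a * b)
    (hsum : ∑ α ∈ Finset.univ.filter (fun α : Fin (a * b) => (α : ℕ) < L),
      knormSq k (ψ α) < 1)
    (mu : ℝ)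
    (hmu : mu = (∑ α ∈ Finset.univ.filter (fun α : Fin (a * b) => (α : ℕ) < L),
                    lam α * knormSq k (ψ α)) /
                (1 - ∑ α ∈ Finset.univ.filter (fun α : Fin (a * b) => (α : ℕ) < L),
                    knormSq k (ψ α)))
    (W : Matrix (Fin a × Fin b) (Fin a × Fin b) ℂ)
    (hW : W = ∑ α ∈ Finset.univ.filter (fun α : Fin (a * b) => L ≤ (α : ℕ)),
                ((lam α : ℝ) : ℂ) • ketbra (ψ α)
            - ∑ α ∈ Finset.univ.filter (fun α : Fin (a * b) => (α : ℕ) < L),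
                ((lam α : ℝ) : ℂ) • ketbra (ψ α))
    (hcond : ∀ α : Fin (a * b), L ≤ (α : ℕ) → mu ≤ lam α) :
    ∀ φ : Fin a × Fin b → ℂ, unitVec φ → schmidtRank φ ≤ k → 0 ≤ qform W φ := by
  classical
  intro φ hφu hφr
  set A := Finset.univ.filter (fun α : Fin (a * b) => (α : ℕ) < L) with hA
  set B := Finset.univ.filter (fun α : Fin (a * b) => L ≤ (α : ℕ)) with hB
  set c : Fin (a * b) → ℝ := fun α => Complex.normSq (inn (ψ α) φ) with hc
  have hc0 : ∀ α, 0 ≤ c α := fun α => Complex.normSq_nonneg _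
  -- each ψ α is a unit vector
  have hψu : ∀ α, unitVec (ψ α) := by
    intro α
    have := hON α α
    simpa [unitVec, inn] using this
  -- orthonormal family in EuclideanSpace
  have hONB : Orthonormal ℂ
      (fun α => (WithLp.toLp 2 (ψ α) : EuclideanSpace ℂ (Fin a × Fin b))) := by
    rw [orthonormal_iff_ite]
    intro i j
    rw [← inn_eq_inner]
    simpa [inn] using hON i j
  haveI : Nonempty (Fin (a * b)) := ⟨⟨0, lt_trans hL0 hL⟩⟩
  have card_eq : Fintype.card (Fin (a * b))
      = Module.finrank ℂ (EuclideanSpace ℂ (Fin a × Fin b)) := by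
    simp [finrank_euclideanSpace]
  set bas := basisOfOrthonormalOfCardEqFinrank hONB card_eq with hbasdef
  have hbas : ⇑bas = fun α => (WithLp.toLp 2 (ψ α) : EuclideanSpace ℂ (Fin a × Fin b)) :=
    coe_basisOfOrthonormalOfCardEqFinrank hONB card_eq
  set onb := bas.toOrthonormalBasis (by rwa [hbas]) with honbdef
  have honb : ∀ α, onb α = (WithLp.toLp 2 (ψ α) : EuclideanSpace ℂ (Fin a × Fin b)) := by
    intro α
    rw [honbdef, Module.Basis.coe_toOrthonormalBasis, hbas]
  -- Parseval
  have hparC : ∑ α, (c α : ℂ) = 1 := by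
    have h := onb.sum_inner_mul_inner
      (WithLp.toLp 2 (φ) : EuclideanSpace ℂ (Fin a × Fin b))
      (WithLp.toLp 2 (φ) : EuclideanSpace ℂ (Fin a × Fin b))
    rw [← inn_eq_inner φ φ, hφu] at h
    rw [← h]
    refine Finset.sum_congr rfl fun α _ => ?_
    rw [honb α, ← inn_eq_inner (ψ α) φ, ← inner_conj_symm
      (WithLp.toLp 2 (φ) : EuclideanSpace ℂ (Fin a × Fin b)), ← inn_eq_inner (ψ α) φ]
    rw [mul_comm, Complex.mul_conj]
  have hpar : ∑ α, c α = 1 := by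
    have := congrArg Complex.re hparC
    simpa using this
  -- quadratic form of a single ketbra
  have hket : ∀ α, (∑ p, ∑ q, star (φ p) * ketbra (ψ α) p q * φ q) = (c α : ℂ) := by
    intro α
    have e1 : ∀ p, ∑ q, star (φ p) * ketbra (ψ α) p q * φ q
        = (star (φ p) * ψ α p) * inn (ψ α) φ := by
      intro p
      rw [inn, Finset.mul_sum]
      refine Finset.sum_congr rfl fun q _ => ?_
      simp [ketbra]; ring
    simp only [e1]
    rw [← Finset.sum_mul]
    have e2 : ∑ p, star (φ p) * ψ α p = star (inn (ψ α) φ) := by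
      rw [inn, star_sum]
      refine Finset.sum_congr rfl fun p _ => ?_
      simp [mul_comm]
    rw [e2, hc]
    simp only [Complex.star_def]
    rw [mul_comm, Complex.mul_conj]
  -- quadratic form of a sum
  have hkey : ∀ S : Finset (Fin (a * b)),
      (∑ p, ∑ q, star (φ p) *
        (∑ α ∈ S, ((lam α : ℝ) : ℂ) • ketbra (ψ α)) p q * φ q)
      = ((∑ α ∈ S, lam α * c α : ℝ) : ℂ) := by
    intro S
    have e1 : ∀ p q, star (φ p) *
        (∑ α ∈ S, ((lam α : ℝ) : ℂ) • ketbra (ψ α)) p q * φ q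
        = ∑ α ∈ S, ((lam α : ℝ) : ℂ) * (star (φ p) * ketbra (ψ α) p q * φ q) := by
      intro p q
      simp only [Matrix.sum_apply, Matrix.smul_apply, smul_eq_mul,
        Finset.sum_mul, Finset.mul_sum]
      refine Finset.sum_congr rfl fun α _ => ?_
      ring
    simp only [e1]
    have e2 : ∀ p, ∑ q, ∑ α ∈ S,
        ((lam α : ℝ) : ℂ) * (star (φ p) * ketbra (ψ α) p q * φ q)
        = ∑ α ∈ S, ∑ q, ((lam α : ℝ) : ℂ) * (star (φ p) * ketbra (ψ α) p q * φ q) :=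
      fun p => Finset.sum_comm
    simp only [e2]
    rw [Finset.sum_comm]
    push_cast
    refine Finset.sum_congr rfl fun α _ => ?_
    rw [← hket α]
    rw [Finset.mul_sum]
    refine Finset.sum_congr rfl fun p _ => ?_
    rw [Finset.mul_sum]
  -- qform value
  have hqf : qform W φ = (∑ α ∈ B, lam α * c α) - (∑ α ∈ A, lam α * c α) := by
    rw [qform, hW]
    have : ∀ p q, star (φ p) *
        ((∑ α ∈ B, ((lam α : ℝ) : ℂ) • ketbra (ψ α)
          - ∑ α ∈ A, ((lam α : ℝ) : ℂ) • ketbra (ψ α))) p q * φ q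
        = star (φ p) * (∑ α ∈ B, ((lam α : ℝ) : ℂ) • ketbra (ψ α)) p q * φ q
          - star (φ p) * (∑ α ∈ A, ((lam α : ℝ) : ℂ) • ketbra (ψ α)) p q * φ q := by
      intro p q
      simp [Matrix.sub_apply]
      ring
    simp only [this, Finset.sum_sub_distrib]
    rw [hkey B, hkey A]
    simp [Complex.sub_re]
  -- bounds from knormSq
  have hcle : ∀ α, c α ≤ knormSq k (ψ α) := by
    intro α
    refine le_csSup ⟨1, fun t ht => knorm_bdd (ψ α) (hψu α) t ht⟩ ?_
    exact ⟨φ, hφu, hφr, rfl⟩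
  have hkn0 : ∀ α, 0 ≤ knormSq k (ψ α) := fun α => le_trans (hc0 α) (hcle α)
  -- split Parseval
  have hsplit : (∑ α ∈ A, c α) + (∑ α ∈ B, c α) = 1 := by
    rw [hA, hB]
    rw [← hpar]
    rw [← Finset.sum_filter_add_sum_filter_not Finset.univ
      (fun α : Fin (a * b) => (α : ℕ) < L) c]
    congr 1
    refine Finset.sum_congr ?_ fun _ _ => rfl
    exact Finset.filter_congr fun x _ => by rw [not_lt]
  set S1 := ∑ α ∈ A, knormSq k (ψ α) with hS1
  have hS1lt : S1 < 1 := hsum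
  have hS1nn : 0 ≤ S1 := Finset.sum_nonneg fun α _ => hkn0 α
  have hAc_le : ∑ α ∈ A, c α ≤ S1 := Finset.sum_le_sum fun α _ => hcle α
  have hAc_nn : 0 ≤ ∑ α ∈ A, c α := Finset.sum_nonneg fun α _ => hc0 α
  have hNnn : 0 ≤ ∑ α ∈ A, lam α * knormSq k (ψ α) :=
    Finset.sum_nonneg fun α _ => mul_nonneg (hlam0 α) (hkn0 α)
  have hmu0 : 0 ≤ mu := by
    rw [hmu]
    exact div_nonneg hNnn (by linarith)
  have hmuN : mu * (1 - S1) = ∑ α ∈ A, lam α * knormSq k (ψ α) := by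
    rw [hmu]
    exact div_mul_cancel₀ _ (by linarith)
  -- chain of inequalities
  have h1 : mu * (∑ α ∈ B, c α) ≤ ∑ α ∈ B, lam α * c α := by
    rw [Finset.mul_sum]
    refine Finset.sum_le_sum fun α hα => ?_
    have hαB : L ≤ (α : ℕ) := by
      rw [hB] at hα; simpa using (Finset.mem_filter.mp hα).2
    exact mul_le_mul_of_nonneg_right (hcond α hαB) (hc0 α)
  have h2 : mu * (1 - S1) ≤ mu * (∑ α ∈ B, c α) := by
    have : 1 - S1 ≤ ∑ α ∈ B, c α := by linarith
    exact mul_le_mul_of_nonneg_left this hmu0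
  have h3 : ∑ α ∈ A, lam α * c α ≤ ∑ α ∈ A, lam α * knormSq k (ψ α) :=
    Finset.sum_le_sum fun α _ => mul_le_mul_of_nonneg_left (hcle α) (hlam0 α)
  rw [hqf]
  linarith [hmuN, h1, h2, h3]
end
end

section
/- Let ψ ∈ H_A ⊗ H_B be a unit vector with Schmidt coefficients s_1 ≥ … ≥ s_d. The nonzero eigenvalues of the partial transpose (id ⊗ T)(|ψ⟩⟨ψ|) are exactly the numbers s_α² (for s_α > 0) and ±s_α s_β for α < β (for s_α s_β > 0). In particular, every eigenvalue of the partial transpose lies in the interval [−s_1 s_2, s_1²]. -/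
open Matrix
open scoped BigOperators

noncomputable section

namespace S5

variable {a b d : ℕ} {s : Fin d → ℝ} {e : Fin d → Fin a → ℂ} {f : Fin d → Fin b → ℂ}
  {ψ : Fin a × Fin b → ℂ}

/-- the vectors e_α ⊗ conj f_β -/
def gv (e : Fin d → Fin a → ℂ) (f : Fin d → Fin b → ℂ) (α β : Fin d) :
    Fin a × Fin b → ℂ := fun p => e α p.1 * star (f β p.2)

lemma gv_ortho (he : ∀ i j, ∑ p, star (e i p) * e j p = (if i = j then (1:ℂ) else 0))
    (hf : ∀ i j, ∑ p, star (f i p) * f j p = (if i = j then (1:ℂ) else 0))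
    (α β γ δ : Fin d) :
    inn (gv e f α β) (gv e f γ δ)
      = (if α = γ then (1:ℂ) else 0) * (if β = δ then (1:ℂ) else 0) := by
  unfold inn gv
  rw [Fintype.sum_prod_type]
  have h1 : ∀ (i : Fin a) (m : Fin b),
      star (e α i * star (f β m)) * (e γ i * star (f δ m))
        = (star (e α i) * e γ i) * (f β m * star (f δ m)) := by
    intro i m
    simp only [star_mul', star_star]
    ring
  simp only [h1]
  rw [← Finset.sum_mul_sum]
  congr 1
  · exact he α γ
  · have : ∀ m : Fin b, f β m * star (f δ m) = star (star (f β m) * f δ m) := by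
      intro m; simp only [star_mul', star_star]
    simp only [this, ← star_sum, hf β δ]
    split <;> simp

lemma inn_zero_right (u : Fin a × Fin b → ℂ) : inn u 0 = 0 := by simp [inn]

lemma inn_add (u x y : Fin a × Fin b → ℂ) : inn u (x + y) = inn u x + inn u y := by
  simp [inn, mul_add, Finset.sum_add_distrib]

lemma inn_sub (u x y : Fin a × Fin b → ℂ) : inn u (x - y) = inn u x - inn u y := by
  simp [inn, mul_sub, Finset.sum_sub_distrib]

/-- key formula for the action of the partial transpose -/
lemma mulVec_eq
    (hψ : ψ = fun p => ∑ j, (s j : ℂ) * e j p.1 * f j p.2)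
    (v : Fin a × Fin b → ℂ) (p : Fin a × Fin b) :
    (partialTranspose (ketbra ψ)).mulVec v p
      = ∑ α, ∑ β, (s α : ℂ) * (s β : ℂ) * inn (gv e f β α) v * gv e f α β p := by
  subst hψ
  simp only [Matrix.mulVec, dotProduct, partialTranspose, ketbra, Matrix.of_apply]
  calc
    (∑ q : Fin a × Fin b, (∑ α, (s α : ℂ) * e α p.1 * f α q.2) *
        star (∑ β, (s β : ℂ) * e β q.1 * f β p.2) * v q)
      = ∑ q : Fin a × Fin b, ∑ α, ∑ β,
          ((s α : ℂ) * e α p.1 * f α q.2) * star ((s β : ℂ) * e β q.1 * f β p.2) * v q := by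
        refine Finset.sum_congr rfl fun q _ => ?_
        rw [star_sum, Finset.sum_mul_sum, Finset.sum_mul]
        exact Finset.sum_congr rfl fun α _ => by rw [Finset.sum_mul]
    _ = ∑ α, ∑ β, ∑ q : Fin a × Fin b,
          ((s α : ℂ) * e α p.1 * f α q.2) * star ((s β : ℂ) * e β q.1 * f β p.2) * v q := by
        rw [Finset.sum_comm]
        exact Finset.sum_congr rfl fun α _ => Finset.sum_comm
    _ = ∑ α, ∑ β, (s α : ℂ) * (s β : ℂ) * inn (gv e f β α) v * gv e f α β p := by
        refine Finset.sum_congr rfl fun α _ => Finset.sum_congr rfl fun β _ => ?_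
        unfold inn gv
        rw [Finset.mul_sum, Finset.sum_mul]
        refine Finset.sum_congr rfl fun q _ => ?_
        simp only [star_mul', star_star, Complex.star_def, Complex.conj_ofReal, Complex.conj_conj]
        ring

end S5

namespace S5

variable {a b d : ℕ} {s : Fin d → ℝ} {e : Fin d → Fin a → ℂ} {f : Fin d → Fin b → ℂ}
  {ψ : Fin a × Fin b → ℂ}

lemma inn_smul (u : Fin a × Fin b → ℂ) (c : ℂ) (v : Fin a × Fin b → ℂ) :
    inn u (c • v) = c * inn u v := by
  unfold inn
  rw [Finset.mul_sum]
  exact Finset.sum_congr rfl fun p _ => by simp; ring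

lemma inn_double (u : Fin a × Fin b → ℂ) (c : Fin d → Fin d → ℂ)
    (w : Fin d → Fin d → Fin a × Fin b → ℂ) :
    inn u (fun p => ∑ α, ∑ β, c α β * w α β p) = ∑ α, ∑ β, c α β * inn u (w α β) := by
  unfold inn
  simp only [Finset.mul_sum]
  rw [Finset.sum_comm]
  refine Finset.sum_congr rfl fun α _ => ?_
  rw [Finset.sum_comm]
  refine Finset.sum_congr rfl fun β _ => ?_
  exact Finset.sum_congr rfl fun p _ => by ring

/-- action on the gv vectors -/
lemma mulVec_gv
    (hψ : ψ = fun p => ∑ j, (s j : ℂ) * e j p.1 * f j p.2)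
    (he : ∀ i j, ∑ p, star (e i p) * e j p = (if i = j then (1:ℂ) else 0))
    (hf : ∀ i j, ∑ p, star (f i p) * f j p = (if i = j then (1:ℂ) else 0))
    (γ δ : Fin d) :
    (partialTranspose (ketbra ψ)).mulVec (gv e f γ δ)
      = ((s γ : ℂ) * (s δ : ℂ)) • gv e f δ γ := by
  funext p
  rw [mulVec_eq hψ]
  simp only [gv_ortho he hf]
  rw [Finset.sum_eq_single_of_mem δ (Finset.mem_univ δ) (fun α _ hα => by simp [hα])]
  rw [Finset.sum_eq_single_of_mem γ (Finset.mem_univ γ) (fun β _ hβ => by simp [hβ])]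
  simp [mul_comm]

/-- the basic eigen-relation -/
lemma inn_gv_mulVec
    (hψ : ψ = fun p => ∑ j, (s j : ℂ) * e j p.1 * f j p.2)
    (he : ∀ i j, ∑ p, star (e i p) * e j p = (if i = j then (1:ℂ) else 0))
    (hf : ∀ i j, ∑ p, star (f i p) * f j p = (if i = j then (1:ℂ) else 0))
    (v : Fin a × Fin b → ℂ) (γ δ : Fin d) :
    inn (gv e f γ δ) ((partialTranspose (ketbra ψ)).mulVec v)
      = (s γ : ℂ) * (s δ : ℂ) * inn (gv e f δ γ) v := by
  have h0 : (partialTranspose (ketbra ψ)).mulVec v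
      = fun p => ∑ α, ∑ β, ((s α : ℂ) * (s β : ℂ) * inn (gv e f β α) v) * gv e f α β p := by
    funext p; rw [mulVec_eq hψ]
  rw [h0, inn_double]
  simp only [gv_ortho he hf]
  rw [Finset.sum_eq_single_of_mem γ (Finset.mem_univ γ) (fun α _ hα => by simp [Ne.symm hα])]
  rw [Finset.sum_eq_single_of_mem δ (Finset.mem_univ δ) (fun β _ hβ => by simp [Ne.symm hβ])]
  simp

/-- if v is orthogonal to all gv's then it is in the kernel -/
lemma mulVec_zero
    (hψ : ψ = fun p => ∑ j, (s j : ℂ) * e j p.1 * f j p.2)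
    (v : Fin a × Fin b → ℂ) (hv : ∀ γ δ, inn (gv e f γ δ) v = 0) :
    (partialTranspose (ketbra ψ)).mulVec v = 0 := by
  funext p
  rw [mulVec_eq hψ]
  simp [hv]

end S5


/-- the nonzero eigenvalues of the partial transpose of |ψ⟩⟨ψ| are exactly
the numbers s_α² (s_α ≠ 0) and ±s_α s_β (α < β, s_α s_β ≠ 0); in particular every
eigenvalue lies in [−s₁s₂, s₁²]. -/
theorem stmt5 {a b d : ℕ} (hd : d = min a b) (hd2 : 2 ≤ d)
    (ψ : Fin a × Fin b → ℂ) (hψ : unitVec ψ)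
    (s : Fin d → ℝ) (e : Fin d → Fin a → ℂ) (f : Fin d → Fin b → ℂ)
    (hS : IsSchmidt ψ s e f) :
    ({ μ : ℝ | μ ≠ 0 ∧
        Module.End.HasEigenvalue (Matrix.toLin' (partialTranspose (ketbra ψ))) (μ : ℂ) }
      = { μ : ℝ | ∃ α : Fin d, s α ≠ 0 ∧ μ = s α ^ 2 } ∪
        { μ : ℝ | ∃ α β : Fin d, α < β ∧ s α * s β ≠ 0 ∧
            (μ = s α * s β ∨ μ = -(s α * s β)) }) ∧
    ∀ μ : ℝ,
      Module.End.HasEigenvalue (Matrix.toLin' (partialTranspose (ketbra ψ))) (μ : ℂ) →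
      -(s ⟨0, by omega⟩ * s ⟨1, by omega⟩) ≤ μ ∧ μ ≤ s ⟨0, by omega⟩ ^ 2 := by
  obtain ⟨he, hf, hmono, hnn, hpsi⟩ := hS
  have hTapp : ∀ v : Fin a × Fin b → ℂ,
      (Matrix.toLin' (partialTranspose (ketbra ψ))) v
        = (partialTranspose (ketbra ψ)).mulVec v := fun v => Matrix.toLin'_apply _ v
  have hgvne : ∀ α β : Fin d, S5.gv e f α β ≠ 0 := by
    intro α β h
    have h1 : inn (S5.gv e f α β) (S5.gv e f α β) = 1 := by
      rw [S5.gv_ortho he hf]; simp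
    rw [h] at h1
    simp [inn] at h1
  -- the key characterization of nonzero eigenvalues
  have key : ∀ μ : ℝ, μ ≠ 0 →
      (Module.End.HasEigenvalue (Matrix.toLin' (partialTranspose (ketbra ψ))) (μ:ℂ) ↔
        ((∃ α : Fin d, s α ≠ 0 ∧ μ = s α ^ 2) ∨
         (∃ α β : Fin d, α < β ∧ s α * s β ≠ 0 ∧
            (μ = s α * s β ∨ μ = -(s α * s β))))) := by
    intro μ hμ
    constructor
    · intro hev
      obtain ⟨v, hv⟩ := hev.exists_hasEigenvector
      have hveq : (partialTranspose (ketbra ψ)).mulVec v = (μ:ℂ) • v := by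
        rw [← hTapp]; exact hv.apply_eq_smul
      have rel : ∀ γ δ : Fin d, (s γ : ℂ) * (s δ : ℂ) * inn (S5.gv e f δ γ) v
          = (μ:ℂ) * inn (S5.gv e f γ δ) v := by
        intro γ δ
        have h1 := S5.inn_gv_mulVec hpsi he hf v γ δ
        rw [hveq, S5.inn_smul] at h1
        exact h1.symm
      have hex : ∃ γ δ : Fin d, inn (S5.gv e f γ δ) v ≠ 0 := by
        by_contra h
        push_neg at h
        have h0 : (partialTranspose (ketbra ψ)).mulVec v = 0 := S5.mulVec_zero hpsi v h
        rw [hveq] at h0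
        rcases smul_eq_zero.mp h0 with h1 | h1
        · exact (Complex.ofReal_ne_zero.mpr hμ) h1
        · exact hv.2 h1
      obtain ⟨γ, δ, hc⟩ := hex
      by_cases hgd : γ = δ
      · subst hgd
        have h1 := rel γ γ
        have h2 : ((s γ : ℂ) * (s γ : ℂ)) = (μ:ℂ) := mul_right_cancel₀ hc h1
        have h3 : s γ * s γ = μ := by exact_mod_cast h2
        refine Or.inl ⟨γ, fun h => hμ (by rw [← h3, h]; ring), by rw [← h3]; ring⟩
      · have h1 := rel γ δ
        have h2 := rel δ γ
        have h3 : ((μ:ℂ)^2 - ((s γ : ℂ)*(s δ : ℂ))^2) * inn (S5.gv e f γ δ) v = 0 := by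
          linear_combination (-(μ:ℂ)) * h1 - (s γ : ℂ) * (s δ : ℂ) * h2
        have h4 : (μ:ℂ)^2 = ((s γ : ℂ)*(s δ : ℂ))^2 := by
          have h5 := (mul_eq_zero.mp h3).resolve_right hc
          linear_combination h5
        have h6 : μ^2 = (s γ * s δ)^2 := by exact_mod_cast h4
        have hne : s γ * s δ ≠ 0 := by
          intro h
          apply hμ
          have : μ ^ 2 = 0 := by rw [h6, h]; ring
          exact (pow_eq_zero_iff (by norm_num : (2:ℕ) ≠ 0)).mp this
        have h7 : μ = s γ * s δ ∨ μ = -(s γ * s δ) := by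
          have h8 : (μ - s γ * s δ) * (μ + s γ * s δ) = 0 := by linear_combination h6
          rcases mul_eq_zero.mp h8 with h9 | h9
          · exact Or.inl (by linarith)
          · exact Or.inr (by linarith)
        rcases Ne.lt_or_gt hgd with hlt | hlt
        · exact Or.inr ⟨γ, δ, hlt, hne, h7⟩
        · refine Or.inr ⟨δ, γ, hlt, by rwa [mul_comm], ?_⟩
          rcases h7 with h | h
          · exact Or.inl (by rw [h]; ring)
          · exact Or.inr (by rw [h]; ring)
    · rintro (⟨α, hα, rfl⟩ | ⟨α, β, hαβ, hne, hcase⟩)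
      · refine Module.End.hasEigenvalue_of_hasEigenvector (x := S5.gv e f α α) ⟨?_, hgvne α α⟩
        rw [Module.End.mem_eigenspace_iff, hTapp, S5.mulVec_gv hpsi he hf α α]
        congr 1
        push_cast
        ring
      · have hβα : α ≠ β := ne_of_lt hαβ
        rcases hcase with rfl | rfl
        · refine Module.End.hasEigenvalue_of_hasEigenvector
            (x := S5.gv e f α β + S5.gv e f β α) ⟨?_, ?_⟩
          · rw [Module.End.mem_eigenspace_iff, hTapp, Matrix.mulVec_add,
              S5.mulVec_gv hpsi he hf α β, S5.mulVec_gv hpsi he hf β α]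
            funext p
            simp only [Pi.add_apply, Pi.smul_apply, smul_eq_mul]
            push_cast
            ring
          · intro h
            have h1 : inn (S5.gv e f α β) (S5.gv e f α β + S5.gv e f β α) = 1 := by
              rw [S5.inn_add, S5.gv_ortho he hf, S5.gv_ortho he hf]
              simp [hβα]
            rw [h] at h1
            simp [inn] at h1
        · refine Module.End.hasEigenvalue_of_hasEigenvector
            (x := S5.gv e f α β - S5.gv e f β α) ⟨?_, ?_⟩
          · rw [Module.End.mem_eigenspace_iff, hTapp, Matrix.mulVec_sub,
              S5.mulVec_gv hpsi he hf α β, S5.mulVec_gv hpsi he hf β α]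
            funext p
            simp only [Pi.sub_apply, Pi.smul_apply, smul_eq_mul]
            push_cast
            ring
          · intro h
            have h1 : inn (S5.gv e f α β) (S5.gv e f α β - S5.gv e f β α) = 1 := by
              rw [S5.inn_sub, S5.gv_ortho he hf, S5.gv_ortho he hf]
              simp [hβα]
            rw [h] at h1
            simp [inn] at h1
  constructor
  · ext μ
    simp only [Set.mem_setOf_eq, Set.mem_union]
    constructor
    · rintro ⟨hμ, hev⟩
      exact (key μ hμ).mp hev
    · intro h
      have hμ : μ ≠ 0 := by
        rcases h with ⟨α, hα, rfl⟩ | ⟨α, β, _, hne, hc⟩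
        · exact pow_ne_zero 2 hα
        · rcases hc with rfl | rfl
          · exact hne
          · simpa using hne
      exact ⟨hμ, (key μ hμ).mpr h⟩
  · intro μ hev
    have h0nn := hnn ⟨0, by omega⟩
    have h1nn := hnn ⟨1, by omega⟩
    have hs0 : ∀ α : Fin d, s α ≤ s ⟨0, by omega⟩ := fun α => hmono (by simp [Fin.le_def])
    have h10 : s ⟨1, by omega⟩ ≤ s ⟨0, by omega⟩ := hs0 _
    by_cases hμ : μ = 0
    · subst hμ
      exact ⟨neg_nonpos.mpr (mul_nonneg h0nn h1nn), sq_nonneg _⟩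
    · rcases (key μ hμ).mp hev with ⟨α, hα, rfl⟩ | ⟨α, β, hαβ, hne, hc⟩
      · have hA := hs0 α
        have hαnn := hnn α
        constructor
        · nlinarith
        · nlinarith
      · have hA := hs0 α
        have hB : s β ≤ s ⟨1, by omega⟩ := by
          refine hmono ?_
          rw [Fin.le_def]
          have := Fin.lt_def.mp hαβ
          simpa using by omega
        have hαnn := hnn α
        have hβnn := hnn β
        have hprod : s α * s β ≤ s ⟨0, by omega⟩ * s ⟨1, by omega⟩ :=
          mul_le_mul hA hB hβnn h0nn
        rcases hc with rfl | rfl <;> constructor <;> nlinarith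
end
end

section
/- The smallest eigenvalue of the partial transpose of a rank-one projection |ψ⟩⟨ψ| is at least −‖ψ‖_1², where ‖ψ‖_1 = s_1(ψ) is the largest Schmidt coefficient; equivalently, |ψ⟩⟨ψ|^Γ ≥ −‖ψ‖_1² · I. -/
open Matrix
open scoped BigOperators ComplexOrder

noncomputable section

def coefC {a b d : ℕ} (e : Fin d → Fin a → ℂ) (f : Fin d → Fin b → ℂ)
    (x : Fin a × Fin b → ℂ) (i j : Fin d) : ℂ :=
  ∑ q, (starRingEnd ℂ) (e i q.1) * f j q.2 * x q

lemma conj_coefC {a b d : ℕ} (e : Fin d → Fin a → ℂ) (f : Fin d → Fin b → ℂ)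
    (x : Fin a × Fin b → ℂ) (i j : Fin d) :
    (starRingEnd ℂ) (coefC e f x i j)
      = ∑ p, (starRingEnd ℂ) (x p) * e i p.1 * (starRingEnd ℂ) (f j p.2) := by
  rw [coefC, map_sum]
  refine Finset.sum_congr rfl fun p _ => ?_
  simp only [_root_.map_mul, Complex.conj_conj]
  ring


lemma sum_swap4 {α β γ δ : Type*} [Fintype α] [Fintype β] [Fintype γ] [Fintype δ]
    {M : Type*} [AddCommMonoid M] (T : α → β → γ → δ → M) :
    ∑ p, ∑ q, ∑ i, ∑ j, T p q i j = ∑ i, ∑ j, ∑ p, ∑ q, T p q i j := by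
  calc ∑ p, ∑ q, ∑ i, ∑ j, T p q i j
      = ∑ p, ∑ i, ∑ q, ∑ j, T p q i j :=
        Finset.sum_congr rfl fun p _ => Finset.sum_comm
    _ = ∑ p, ∑ i, ∑ j, ∑ q, T p q i j :=
        Finset.sum_congr rfl fun p _ => Finset.sum_congr rfl fun i _ => Finset.sum_comm
    _ = ∑ i, ∑ p, ∑ j, ∑ q, T p q i j := Finset.sum_comm
    _ = ∑ i, ∑ j, ∑ p, ∑ q, T p q i j :=
        Finset.sum_congr rfl fun i _ => Finset.sum_comm


lemma quad_expand {a b d : ℕ} (s : Fin d → ℝ) (e : Fin d → Fin a → ℂ)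
    (f : Fin d → Fin b → ℂ) (x : Fin a × Fin b → ℂ) :
    star x ⬝ᵥ (partialTranspose (ketbra (fun p => ∑ j, (s j : ℂ) * e j p.1 * f j p.2)) *ᵥ x)
      = ∑ i, ∑ j, ((s i : ℂ) * (s j : ℂ))
          * ((starRingEnd ℂ) (coefC e f x i j) * coefC e f x j i) := by
  calc star x ⬝ᵥ (partialTranspose (ketbra (fun p => ∑ j, (s j : ℂ) * e j p.1 * f j p.2)) *ᵥ x)
      = ∑ p, ∑ q, ∑ i, ∑ j,
          (((starRingEnd ℂ) (x p) * e i p.1 * (starRingEnd ℂ) (f j p.2))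
            * (((s i : ℂ)) * ((s j : ℂ)))
            * ((starRingEnd ℂ) (e j q.1) * f i q.2 * x q)) := by
        simp only [dotProduct, mulVec, partialTranspose, ketbra, Matrix.of_apply,
          Pi.star_apply]
        refine Finset.sum_congr rfl fun p _ => ?_
        rw [Finset.mul_sum]
        refine Finset.sum_congr rfl fun q _ => ?_
        rw [star_sum, Finset.sum_mul_sum, Finset.sum_mul, Finset.mul_sum]
        refine Finset.sum_congr rfl fun i _ => ?_
        rw [Finset.sum_mul, Finset.mul_sum]
        refine Finset.sum_congr rfl fun j _ => ?_
        simp only [Complex.star_def, _root_.map_mul, Complex.conj_ofReal]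
        ring
    _ = ∑ i, ∑ j, ∑ p, ∑ q,
          (((starRingEnd ℂ) (x p) * e i p.1 * (starRingEnd ℂ) (f j p.2))
            * (((s i : ℂ)) * ((s j : ℂ)))
            * ((starRingEnd ℂ) (e j q.1) * f i q.2 * x q)) := sum_swap4 _
    _ = ∑ i, ∑ j, ((s i : ℂ) * (s j : ℂ))
          * ((starRingEnd ℂ) (coefC e f x i j) * coefC e f x j i) := by
        refine Finset.sum_congr rfl fun i _ => Finset.sum_congr rfl fun j _ => ?_
        rw [conj_coefC, coefC, Finset.sum_mul_sum, Finset.mul_sum]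
        refine Finset.sum_congr rfl fun p _ => ?_
        rw [Finset.mul_sum]
        refine Finset.sum_congr rfl fun q _ => ?_
        ring

lemma bessel_aux {P D : Type*} [Fintype P] [Fintype D] [DecidableEq D] (g : D → P → ℂ)
    (hg : ∀ i j, ∑ p, (starRingEnd ℂ) (g i p) * g j p = if i = j then (1:ℂ) else 0)
    (x : P → ℂ) :
    ∑ i, Complex.normSq (∑ p, (starRingEnd ℂ) (g i p) * x p)
      ≤ ∑ p, Complex.normSq (x p) := by
  set c : D → ℂ := fun i => ∑ p, (starRingEnd ℂ) (g i p) * x p with hcdef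
  set y : P → ℂ := fun p => x p - ∑ i, c i * g i p with hydef
  have hcc : ∀ i, ∑ p, (starRingEnd ℂ) (x p) * g i p = (starRingEnd ℂ) (c i) := by
    intro i
    rw [hcdef]
    simp only [map_sum, _root_.map_mul, Complex.conj_conj]
    exact Finset.sum_congr rfl fun p _ => mul_comm _ _
  have hE : (∑ p, (starRingEnd ℂ) (y p) * y p)
      = (∑ p, (starRingEnd ℂ) (x p) * x p) - ∑ i, (starRingEnd ℂ) (c i) * c i := by
    have step1 : (∑ p, (starRingEnd ℂ) (y p) * y p)
        = ∑ p, ((starRingEnd ℂ) (x p) * x p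
            - (starRingEnd ℂ) (x p) * (∑ i, c i * g i p)
            - (∑ i, (starRingEnd ℂ) (c i) * (starRingEnd ℂ) (g i p)) * x p
            + (∑ i, (starRingEnd ℂ) (c i) * (starRingEnd ℂ) (g i p))
              * (∑ j, c j * g j p)) := by
      refine Finset.sum_congr rfl fun p _ => ?_
      simp only [hydef, map_sub, map_sum, _root_.map_mul]
      ring
    have hP2 : ∑ p, (starRingEnd ℂ) (x p) * (∑ i, c i * g i p)
        = ∑ i, (starRingEnd ℂ) (c i) * c i := by
      simp only [Finset.mul_sum]
      rw [Finset.sum_comm]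
      refine Finset.sum_congr rfl fun i _ => ?_
      rw [← hcc i, Finset.sum_mul]
      exact Finset.sum_congr rfl fun p _ => by ring
    have hP3 : ∑ p, (∑ i, (starRingEnd ℂ) (c i) * (starRingEnd ℂ) (g i p)) * x p
        = ∑ i, (starRingEnd ℂ) (c i) * c i := by
      simp only [Finset.sum_mul]
      rw [Finset.sum_comm]
      refine Finset.sum_congr rfl fun i _ => ?_
      rw [hcdef, Finset.mul_sum]
      exact Finset.sum_congr rfl fun p _ => by ring
    have hP4 : ∑ p, (∑ i, (starRingEnd ℂ) (c i) * (starRingEnd ℂ) (g i p))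
        * (∑ j, c j * g j p) = ∑ i, (starRingEnd ℂ) (c i) * c i := by
      have expand : ∀ p : P, (∑ i, (starRingEnd ℂ) (c i) * (starRingEnd ℂ) (g i p))
          * (∑ j, c j * g j p)
          = ∑ i, ∑ j, ((starRingEnd ℂ) (c i) * c j)
              * ((starRingEnd ℂ) (g i p) * g j p) := by
        intro p
        rw [Finset.sum_mul_sum]
        exact Finset.sum_congr rfl fun i _ => Finset.sum_congr rfl fun j _ => by ring
      simp only [expand]
      rw [Finset.sum_comm]
      refine Finset.sum_congr rfl fun i _ => ?_
      rw [Finset.sum_comm]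
      calc ∑ j, ∑ p, ((starRingEnd ℂ) (c i) * c j) * ((starRingEnd ℂ) (g i p) * g j p)
          = ∑ j, ((starRingEnd ℂ) (c i) * c j) * (∑ p, (starRingEnd ℂ) (g i p) * g j p) :=
            Finset.sum_congr rfl fun j _ => (Finset.mul_sum _ _ _).symm
        _ = ∑ j, ((starRingEnd ℂ) (c i) * c j) * (if i = j then (1:ℂ) else 0) := by
            simp only [hg]
        _ = (starRingEnd ℂ) (c i) * c i := by
            simp [Finset.sum_ite_eq, mul_ite]
    rw [step1]
    simp only [Finset.sum_add_distrib, Finset.sum_sub_distrib, hP2, hP3, hP4]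
    ring
  have hre := congrArg Complex.re hE
  have hconj : ∀ z : ℂ, ((starRingEnd ℂ) z * z) = (Complex.normSq z : ℂ) := fun z => by
    rw [mul_comm, Complex.mul_conj]
  simp only [hconj, Complex.re_sum, Complex.sub_re, Complex.ofReal_re] at hre
  have h0 : (0:ℝ) ≤ ∑ p, Complex.normSq (y p) :=
    Finset.sum_nonneg fun _ _ => Complex.normSq_nonneg _
  rw [hre] at h0
  linarith


lemma ortho_g {a b d : ℕ} (e : Fin d → Fin a → ℂ) (f : Fin d → Fin b → ℂ)
    (he : ∀ i j, ∑ p, (starRingEnd ℂ) (e i p) * e j p = (if i = j then (1:ℂ) else 0))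
    (hf : ∀ i j, ∑ p, (starRingEnd ℂ) (f i p) * f j p = (if i = j then (1:ℂ) else 0))
    (ij kl : Fin d × Fin d) :
    ∑ p : Fin a × Fin b,
      (starRingEnd ℂ) (e ij.1 p.1 * (starRingEnd ℂ) (f ij.2 p.2))
        * (e kl.1 p.1 * (starRingEnd ℂ) (f kl.2 p.2))
      = if ij = kl then (1:ℂ) else 0 := by
  obtain ⟨i, j⟩ := ij; obtain ⟨k, l⟩ := kl
  have h1 : ∑ p : Fin a × Fin b,
      (starRingEnd ℂ) (e i p.1 * (starRingEnd ℂ) (f j p.2))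
        * (e k p.1 * (starRingEnd ℂ) (f l p.2))
      = (∑ p1, (starRingEnd ℂ) (e i p1) * e k p1)
        * (∑ p2, f j p2 * (starRingEnd ℂ) (f l p2)) := by
    rw [Fintype.sum_prod_type, Finset.sum_mul_sum]
    refine Finset.sum_congr rfl fun p1 _ => Finset.sum_congr rfl fun p2 _ => ?_
    simp only [_root_.map_mul, Complex.conj_conj]
    ring
  have h2 : ∑ p2, f j p2 * (starRingEnd ℂ) (f l p2)
      = if j = l then (1:ℂ) else 0 := by
    have h3 : ∑ p2, f j p2 * (starRingEnd ℂ) (f l p2)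
        = (starRingEnd ℂ) (∑ p2, (starRingEnd ℂ) (f j p2) * f l p2) := by
      rw [map_sum]
      refine Finset.sum_congr rfl fun p2 _ => ?_
      simp only [_root_.map_mul, Complex.conj_conj]
      try ring
    rw [h3, hf j l]
    split_ifs <;> simp
  rw [h1, he i k, h2]
  simp only [Prod.mk.injEq]
  split_ifs with h1' h2' h3' <;> simp_all

/-- |ψ⟩⟨ψ|^Γ ≥ −s₁²·I where s₁ is the largest Schmidt coefficient. -/
theorem stmt6 {a b d : ℕ} (hd : 0 < d)
    (ψ : Fin a × Fin b → ℂ) (hψ : unitVec ψ)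
    (s : Fin d → ℝ) (e : Fin d → Fin a → ℂ) (f : Fin d → Fin b → ℂ)
    (hS : IsSchmidt ψ s e f) :
    (partialTranspose (ketbra ψ) +
      ((s ⟨0, hd⟩ ^ 2 : ℝ) : ℂ) • (1 : Matrix (Fin a × Fin b) (Fin a × Fin b) ℂ)).PosSemidef := by
  obtain ⟨he, hf, hmono, hpos, hdecomp⟩ := hS
  have he' : ∀ i j, ∑ p, (starRingEnd ℂ) (e i p) * e j p = (if i = j then (1:ℂ) else 0) := he
  have hf' : ∀ i j, ∑ p, (starRingEnd ℂ) (f i p) * f j p = (if i = j then (1:ℂ) else 0) := hf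
  have hs0 : ∀ i : Fin d, s i ≤ s ⟨0, hd⟩ := fun i => hmono (by simp [Fin.le_def])
  subst hdecomp
  set s0 : ℝ := s ⟨0, hd⟩ with hs0def
  have hs0nn : 0 ≤ s0 := hpos _
  set ψ : Fin a × Fin b → ℂ := fun p => ∑ j, (s j : ℂ) * e j p.1 * f j p.2 with hψdef
  rw [posSemidef_iff_dotProduct_mulVec]
  constructor
  · -- Hermitian
    apply Matrix.IsHermitian.add
    · show (partialTranspose (ketbra ψ))ᴴ = partialTranspose (ketbra ψ)
      ext p q
      simp only [conjTranspose_apply, partialTranspose, ketbra, Matrix.of_apply,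
        StarMul.star_mul, star_star]
      try ring
    · show (((s0 ^ 2 : ℝ) : ℂ) • (1 : Matrix (Fin a × Fin b) (Fin a × Fin b) ℂ))ᴴ = _
      rw [conjTranspose_smul, conjTranspose_one]
      simp [Complex.star_def, Complex.conj_ofReal]
  · intro x
    have hQ : star x ⬝ᵥ (partialTranspose (ketbra ψ) *ᵥ x)
        = ∑ i, ∑ j, ((s i : ℂ) * (s j : ℂ))
            * ((starRingEnd ℂ) (coefC e f x i j) * coefC e f x j i) :=
      quad_expand s e f x
    have hxx : star x ⬝ᵥ x = ((∑ p, Complex.normSq (x p) : ℝ) : ℂ) := by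
      simp only [dotProduct, Pi.star_apply, Complex.star_def, Complex.ofReal_sum]
      exact Finset.sum_congr rfl fun p _ => by rw [mul_comm, Complex.mul_conj]
    have hvec : star x ⬝ᵥ ((partialTranspose (ketbra ψ)
          + ((s0 ^ 2 : ℝ) : ℂ) • (1 : Matrix (Fin a × Fin b) (Fin a × Fin b) ℂ)) *ᵥ x)
        = (∑ i, ∑ j, ((s i : ℂ) * (s j : ℂ))
            * ((starRingEnd ℂ) (coefC e f x i j) * coefC e f x j i))
          + ((s0 ^ 2 : ℝ) : ℂ) * ((∑ p, Complex.normSq (x p) : ℝ) : ℂ) := by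
      rw [add_mulVec, dotProduct_add, hQ, smul_mulVec, one_mulVec,
        dotProduct_smul, smul_eq_mul, hxx]
    rw [hvec]
    have hbessel : ∑ i, ∑ j, Complex.normSq (coefC e f x i j)
        ≤ ∑ p, Complex.normSq (x p) := by
      have hB := bessel_aux (P := Fin a × Fin b) (D := Fin d × Fin d)
        (fun ij p => e ij.1 p.1 * (starRingEnd ℂ) (f ij.2 p.2))
        (fun ij kl => ortho_g e f he' hf' ij kl) x
      rw [Fintype.sum_prod_type] at hB
      refine le_trans (le_of_eq ?_) hB
      refine Finset.sum_congr rfl fun i _ => Finset.sum_congr rfl fun j _ => ?_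
      congr 1
      rw [coefC]
      refine Finset.sum_congr rfl fun p _ => ?_
      simp only [_root_.map_mul, Complex.conj_conj]
      try ring
    set X : ℝ := ∑ p, Complex.normSq (x p) with hXdef
    set C : ℝ := ∑ i, ∑ j, Complex.normSq (coefC e f x i j) with hCdef
    rw [Complex.le_def]
    constructor
    · -- real part
      simp only [Complex.add_re, Complex.zero_re, ← Complex.ofReal_mul,
        Complex.ofReal_re, Complex.re_sum]
      simp only [Complex.ofReal_mul]
      have hterm : ∀ i j : Fin d,
          -(s0 ^ 2) * ((Complex.normSq (coefC e f x i j)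
              + Complex.normSq (coefC e f x j i)) / 2)
            ≤ (((s i : ℂ) * (s j : ℂ))
                * ((starRingEnd ℂ) (coefC e f x i j) * coefC e f x j i)).re := by
        intro i j
        have h1 : (((s i : ℂ) * (s j : ℂ))
              * ((starRingEnd ℂ) (coefC e f x i j) * coefC e f x j i)).re
            = (s i * s j) * ((starRingEnd ℂ) (coefC e f x i j) * coefC e f x j i).re := by
          rw [← Complex.ofReal_mul, Complex.re_ofReal_mul]
        rw [h1]
        have habs : |((starRingEnd ℂ) (coefC e f x i j) * coefC e f x j i).re|
            ≤ (Complex.normSq (coefC e f x i j) + Complex.normSq (coefC e f x j i)) / 2 := by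
          refine le_trans (Complex.abs_re_le_norm _) ?_
          rw [norm_mul, Complex.norm_conj]
          have h2 : ‖coefC e f x i j‖ * ‖coefC e f x j i‖
              ≤ (‖coefC e f x i j‖ ^ 2 + ‖coefC e f x j i‖ ^ 2) / 2 := by
            nlinarith [sq_nonneg (‖coefC e f x i j‖ - ‖coefC e f x j i‖)]
          simpa [Complex.sq_norm] using h2
        have hsij : 0 ≤ s i * s j := mul_nonneg (hpos i) (hpos j)
        have hsij' : s i * s j ≤ s0 ^ 2 := by
          have := mul_le_mul (hs0 i) (hs0 j) (hpos j) hs0nn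
          nlinarith
        have hnn : 0 ≤ (Complex.normSq (coefC e f x i j)
            + Complex.normSq (coefC e f x j i)) / 2 := by
          have := Complex.normSq_nonneg (coefC e f x i j)
          have := Complex.normSq_nonneg (coefC e f x j i)
          linarith
        have hd2 := abs_le.mp habs
        nlinarith
      have hsum : ∑ i, ∑ j, (-(s0 ^ 2) * ((Complex.normSq (coefC e f x i j)
            + Complex.normSq (coefC e f x j i)) / 2))
          ≤ ∑ i, ∑ j, (((s i : ℂ) * (s j : ℂ))
              * ((starRingEnd ℂ) (coefC e f x i j) * coefC e f x j i)).re :=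
        Finset.sum_le_sum fun i _ => Finset.sum_le_sum fun j _ => hterm i j
      have hswap : ∑ i, ∑ j, Complex.normSq (coefC e f x j i) = C := by
        rw [hCdef]; exact Finset.sum_comm
      have hhalf : ∑ i, ∑ j, (-(s0 ^ 2) * ((Complex.normSq (coefC e f x i j)
            + Complex.normSq (coefC e f x j i)) / 2)) = -(s0 ^ 2) * C := by
        calc ∑ i, ∑ j, (-(s0 ^ 2) * ((Complex.normSq (coefC e f x i j)
              + Complex.normSq (coefC e f x j i)) / 2))
            = ∑ i, ∑ j, ((-(s0 ^ 2) / 2) * Complex.normSq (coefC e f x i j)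
              + (-(s0 ^ 2) / 2) * Complex.normSq (coefC e f x j i)) := by
              refine Finset.sum_congr rfl fun i _ => Finset.sum_congr rfl fun j _ => ?_
              ring
          _ = (∑ i, ∑ j, (-(s0 ^ 2) / 2) * Complex.normSq (coefC e f x i j))
              + ∑ i, ∑ j, (-(s0 ^ 2) / 2) * Complex.normSq (coefC e f x j i) := by
              simp only [Finset.sum_add_distrib]
          _ = (-(s0 ^ 2) / 2) * C + (-(s0 ^ 2) / 2) * C := by
              simp only [← Finset.mul_sum]
              rw [hswap, hCdef]
          _ = -(s0 ^ 2) * C := by ring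
      rw [hhalf] at hsum
      have hCX : s0 ^ 2 * C ≤ s0 ^ 2 * X :=
        mul_le_mul_of_nonneg_left hbessel (sq_nonneg s0)
      linarith
    · -- imaginary part
      simp only [Complex.add_im, Complex.zero_im, ← Complex.ofReal_mul,
        Complex.ofReal_im, Complex.im_sum, add_zero]
      simp only [Complex.ofReal_mul]
      have key : ∀ i j : Fin d,
          (((s j : ℂ) * (s i : ℂ))
            * ((starRingEnd ℂ) (coefC e f x j i) * coefC e f x i j)).im
          = -((((s i : ℂ) * (s j : ℂ))
            * ((starRingEnd ℂ) (coefC e f x i j) * coefC e f x j i)).im) := by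
        intro i j
        have e1 : ((s j : ℂ) * (s i : ℂ))
              * ((starRingEnd ℂ) (coefC e f x j i) * coefC e f x i j)
            = (starRingEnd ℂ) (((s i : ℂ) * (s j : ℂ))
              * ((starRingEnd ℂ) (coefC e f x i j) * coefC e f x j i)) := by
          simp only [_root_.map_mul, Complex.conj_conj, Complex.conj_ofReal]
          ring
        rw [e1, Complex.conj_im]
      set S : ℝ := ∑ i, ∑ j, (((s i : ℂ) * (s j : ℂ))
          * ((starRingEnd ℂ) (coefC e f x i j) * coefC e f x j i)).im with hSdef
      have h1 : (∑ i, ∑ j, (((s j : ℂ) * (s i : ℂ))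
            * ((starRingEnd ℂ) (coefC e f x j i) * coefC e f x i j)).im) = S := by
        rw [hSdef]; exact Finset.sum_comm
      have h2 : (∑ i, ∑ j, (((s j : ℂ) * (s i : ℂ))
            * ((starRingEnd ℂ) (coefC e f x j i) * coefC e f x i j)).im) = -S := by
        rw [hSdef]
        calc (∑ i, ∑ j, (((s j : ℂ) * (s i : ℂ))
              * ((starRingEnd ℂ) (coefC e f x j i) * coefC e f x i j)).im)
            = ∑ i, ∑ j, -((((s i : ℂ) * (s j : ℂ))
              * ((starRingEnd ℂ) (coefC e f x i j) * coefC e f x j i)).im) :=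
              Finset.sum_congr rfl fun i _ => Finset.sum_congr rfl fun j _ => key i j
          _ = _ := by simp [← Finset.sum_neg_distrib]
      have : S = 0 := by rw [← h1] at *; linarith [h1, h2]
      rw [hSdef] at this
      linarith [this]
end
end

section
/- For a unit vector ψ_1 ∈ H_A ⊗ H_B with largest Schmidt coefficient s_1, set κ = s_1². Then the operator W = κ·I − |ψ_1⟩⟨ψ_1| has positive semidefinite partial transpose: W^Γ ≥ 0. -/
open Matrix
open scoped BigOperators ComplexOrder

noncomputable section

/-! ### Auxiliary lemmas for Statement 10 -/

private lemma sum_swap4_s10 {ι₁ ι₂ ι₃ ι₄ M : Type*} [AddCommMonoid M]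
    [Fintype ι₁] [Fintype ι₂] [Fintype ι₃] [Fintype ι₄]
    (g : ι₁ → ι₂ → ι₃ → ι₄ → M) :
    ∑ a, ∑ b, ∑ c, ∑ e, g a b c e = ∑ c, ∑ e, ∑ b, ∑ a, g a b c e := by
  calc ∑ a, ∑ b, ∑ c, ∑ e, g a b c e
      = ∑ a, ∑ c, ∑ b, ∑ e, g a b c e :=
        Finset.sum_congr rfl fun a _ => Finset.sum_comm
    _ = ∑ c, ∑ a, ∑ b, ∑ e, g a b c e := Finset.sum_comm
    _ = ∑ c, ∑ a, ∑ e, ∑ b, g a b c e :=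
        Finset.sum_congr rfl fun c _ => Finset.sum_congr rfl fun a _ => Finset.sum_comm
    _ = ∑ c, ∑ e, ∑ a, ∑ b, g a b c e :=
        Finset.sum_congr rfl fun c _ => Finset.sum_comm
    _ = ∑ c, ∑ e, ∑ b, ∑ a, g a b c e :=
        Finset.sum_congr rfl fun c _ => Finset.sum_congr rfl fun e _ => Finset.sum_comm

private lemma re_conj_mul_le (u v : ℂ) :
    (star u * v).re ≤ (Complex.normSq u + Complex.normSq v) / 2 := by
  have h := Complex.normSq_nonneg (u - v)
  simp only [Complex.normSq_apply, Complex.sub_re, Complex.sub_im, Complex.star_def,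
    Complex.mul_re, Complex.conj_re, Complex.conj_im] at h ⊢
  nlinarith [h]

private lemma sum_antisymm {ι : Type*} [Fintype ι] (g : ι → ι → ℝ)
    (hg : ∀ k l, g l k = - g k l) :
    ∑ k, ∑ l, g k l = 0 := by
  have h : ∑ k, ∑ l, g k l = - ∑ k, ∑ l, g k l := by
    calc ∑ k, ∑ l, g k l = ∑ l, ∑ k, g k l := Finset.sum_comm
      _ = ∑ l, ∑ k, - g l k :=
          Finset.sum_congr rfl fun l _ => Finset.sum_congr rfl fun k _ => by rw [hg]
      _ = - ∑ l, ∑ k, g l k := by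
          simp [Finset.sum_neg_distrib]
  linarith

/-- for a unit vector ψ₁ with largest Schmidt coefficient s₁ and κ = s₁²,
the witness W = κ·I − |ψ₁⟩⟨ψ₁| has positive semidefinite partial transpose. -/
theorem stmt10 {a b d : ℕ} (hd : 0 < d)
    (ψ₁ : Fin a × Fin b → ℂ) (hψ : unitVec ψ₁)
    (s : Fin d → ℝ) (e : Fin d → Fin a → ℂ) (f : Fin d → Fin b → ℂ)
    (hS : IsSchmidt ψ₁ s e f) :
    (partialTranspose
      (((s ⟨0, hd⟩ ^ 2 : ℝ) : ℂ) • (1 : Matrix (Fin a × Fin b) (Fin a × Fin b) ℂ)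
        - ketbra ψ₁)).PosSemidef := by
  obtain ⟨he, hf, hmono, hsnn, hdef⟩ := hS
  set κ : ℝ := s ⟨0, hd⟩ ^ 2 with hκ
  rw [Matrix.posSemidef_iff_dotProduct_mulVec]
  constructor
  · -- Hermitian part
    ext p q
    simp only [Matrix.conjTranspose_apply, partialTranspose, ketbra, Matrix.of_apply,
      Matrix.sub_apply, Matrix.smul_apply, Matrix.one_apply, smul_eq_mul, star_sub, star_mul',
      star_star, Complex.star_def, Complex.conj_ofReal, Prod.mk.injEq, MonoidWithZeroHom.map_ite_one_zero,
      Complex.conj_conj]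
    rw [if_congr (show (q.1 = p.1 ∧ p.2 = q.2) ↔ (p.1 = q.1 ∧ q.2 = p.2) by tauto) rfl rfl]
    ring
  · -- Quadratic form part
    intro x
    classical
    -- overlap coefficients with the orthonormal family  e k ⊗ conj (f l)
    set c : Fin d → Fin d → ℂ :=
      fun k l => ∑ p : Fin a × Fin b, (star (e k p.1) * f l p.2) * x p with hc
    set S : ℝ := ∑ p, Complex.normSq (x p) with hSdef
    -- orthonormality of the family e k ⊗ conj (f l)
    have hortho : ∀ k l k' l', ∑ p : Fin a × Fin b,
        (star (e k p.1) * f l p.2) * (e k' p.1 * star (f l' p.2))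
          = (if k = k' then (1:ℂ) else 0) * (if l' = l then (1:ℂ) else 0) := by
      intro k l k' l'
      rw [Fintype.sum_prod_type, ← he k k', ← hf l' l, Finset.sum_mul_sum]
      exact Finset.sum_congr rfl fun i _ => Finset.sum_congr rfl fun m _ => by ring
    -- Bessel's inequality
    have hBessel : ∑ k, ∑ l, Complex.normSq (c k l) ≤ S := by
      set V : Fin d × Fin d → EuclideanSpace ℂ (Fin a × Fin b) :=
        fun u => WithLp.toLp 2 (fun p : Fin a × Fin b => e u.1 p.1 * star (f u.2 p.2)) with hV
      set X : EuclideanSpace ℂ (Fin a × Fin b) := WithLp.toLp 2 x with hX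
      have horth : Orthonormal ℂ V := by
        rw [orthonormal_iff_ite]
        intro u u'
        rw [PiLp.inner_apply]
        calc (∑ p : Fin a × Fin b,
              inner ℂ (V u p) (V u' p))
            = ∑ p : Fin a × Fin b,
              (star (e u.1 p.1) * f u.2 p.2) * (e u'.1 p.1 * star (f u'.2 p.2)) := by
              refine Finset.sum_congr rfl fun p _ => by
                simp [hV, RCLike.inner_apply, Complex.star_def, mul_comm]
          _ = (if u.1 = u'.1 then (1:ℂ) else 0) * (if u'.2 = u.2 then (1:ℂ) else 0) :=
              hortho _ _ _ _
          _ = if u = u' then 1 else 0 := by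
              by_cases h1 : u.1 = u'.1 <;> by_cases h2 : u.2 = u'.2 <;>
                simp [h1, h2, Prod.ext_iff, eq_comm]
      have hB := horth.sum_inner_products_le X (s := Finset.univ)
      have hnorm : ‖X‖ ^ 2 = S := by
        rw [EuclideanSpace.norm_eq, Real.sq_sqrt (by positivity)]
        exact Finset.sum_congr rfl fun p _ => by
          rw [← Complex.sq_norm]
      have hin : ∀ u : Fin d × Fin d, ‖(inner ℂ (V u) X : ℂ)‖ ^ 2
          = Complex.normSq (c u.1 u.2) := by
        intro u
        rw [PiLp.inner_apply, ← Complex.sq_norm]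
        congr 2
        refine Finset.sum_congr rfl fun p _ => by
          simp [hV, hX, hc, Complex.star_def, mul_comm, mul_left_comm]
      calc ∑ k, ∑ l, Complex.normSq (c k l)
          = ∑ u : Fin d × Fin d, ‖(inner ℂ (V u) X : ℂ)‖ ^ 2 := by
            rw [← Fintype.sum_prod_type']
            exact Finset.sum_congr rfl fun u _ => (hin u).symm
        _ ≤ ‖X‖ ^ 2 := hB
        _ = S := hnorm
    -- split the quadratic form
    have hPT : partialTranspose ((κ:ℂ) • (1 : Matrix (Fin a × Fin b) (Fin a × Fin b) ℂ)
        - ketbra ψ₁)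
        = (κ:ℂ) • (1 : Matrix (Fin a × Fin b) (Fin a × Fin b) ℂ)
          - partialTranspose (ketbra ψ₁) := by
      ext p q
      simp only [partialTranspose, ketbra, Matrix.of_apply, Matrix.sub_apply, Matrix.smul_apply,
        Matrix.one_apply, smul_eq_mul, Prod.mk.injEq]
      rw [if_congr (show (p.1 = q.1 ∧ q.2 = p.2) ↔ p = q by
        rw [Prod.ext_iff]; tauto) rfl rfl]
    have hSx : (∑ p, star (x p) * x p) = ((S : ℝ) : ℂ) := by
      rw [hSdef, Complex.ofReal_sum]
      exact Finset.sum_congr rfl fun p _ => by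
        rw [Complex.normSq_eq_conj_mul_self]; rfl
    have hsplit : star x ⬝ᵥ (partialTranspose ((κ:ℂ) • 1 - ketbra ψ₁)) *ᵥ x
        = ((S : ℝ) : ℂ) * (κ:ℂ) - star x ⬝ᵥ (partialTranspose (ketbra ψ₁)) *ᵥ x := by
      rw [hPT, Matrix.sub_mulVec, dotProduct_sub, Matrix.smul_mulVec,
        Matrix.one_mulVec, dotProduct_smul, smul_eq_mul]
      congr 1
      rw [← hSx, mul_comm]
      simp [dotProduct, Pi.star_apply]
    -- the cross term
    have hA0 : star x ⬝ᵥ (partialTranspose (ketbra ψ₁)) *ᵥ x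
        = ∑ k, ∑ l, ((s k : ℂ) * (s l : ℂ)) *
            (star (∑ p : Fin a × Fin b, (star (e k p.1) * f l p.2) * x p)
              * (∑ p : Fin a × Fin b, (star (e l p.1) * f k p.2) * x p)) := by
      subst hdef
      simp only [dotProduct, Matrix.mulVec, partialTranspose, ketbra, Matrix.of_apply,
        Pi.star_apply, star_sum, star_mul', Finset.sum_mul, Finset.mul_sum, Complex.star_def,
        Complex.conj_ofReal, Complex.conj_conj, RingHom.map_mul]
      rw [sum_swap4_s10 (g := fun (p q : Fin a × Fin b) (l k : Fin d) =>
        (starRingEnd ℂ) (x p) *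
          ((s k : ℂ) * e k p.1 * f k q.2 * ((s l : ℂ) * (starRingEnd ℂ) (e l q.1) *
            (starRingEnd ℂ) (f l p.2)) * x q)), Finset.sum_comm]
      refine Finset.sum_congr rfl fun k _ => Finset.sum_congr rfl fun l _ =>
        Finset.sum_congr rfl fun q _ => Finset.sum_congr rfl fun p _ => by ring
    have hA : star x ⬝ᵥ (partialTranspose (ketbra ψ₁)) *ᵥ x
        = ∑ k, ∑ l, ((s k * s l : ℝ) : ℂ) * (star (c k l) * c l k) := by
      rw [hA0]
      refine Finset.sum_congr rfl fun k _ => Finset.sum_congr rfl fun l _ => ?_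
      rw [hc]
      push_cast
      ring
    set T : ℂ := ∑ k, ∑ l, ((s k * s l : ℝ) : ℂ) * (star (c k l) * c l k) with hT
    have hTre : T.re = ∑ k, ∑ l, (s k * s l) * (star (c k l) * c l k).re := by
      rw [hT, Complex.re_sum]
      refine Finset.sum_congr rfl fun k _ => ?_
      rw [Complex.re_sum]
      exact Finset.sum_congr rfl fun l _ => Complex.re_ofReal_mul _ _
    have hTim : T.im = 0 := by
      rw [hT, Complex.im_sum]
      have : ∀ k, (∑ l, (((s k * s l : ℝ) : ℂ) * (star (c k l) * c l k))).im
          = ∑ l, (s k * s l) * (star (c k l) * c l k).im := by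
        intro k
        rw [Complex.im_sum]
        exact Finset.sum_congr rfl fun l _ => Complex.im_ofReal_mul _ _
      rw [Finset.sum_congr rfl fun k _ => this k]
      refine sum_antisymm (fun k l => (s k * s l) * (star (c k l) * c l k).im) ?_
      intro k l
      simp only [Complex.star_def, Complex.mul_im, Complex.conj_re, Complex.conj_im]
      ring
    -- bound the real part of the cross term
    have h1 : ∑ k, ∑ l, ((s k * s l) * Complex.normSq (c l k))
        = ∑ k, ∑ l, ((s k * s l) * Complex.normSq (c k l)) := by
      rw [Finset.sum_comm]
      exact Finset.sum_congr rfl fun k _ => Finset.sum_congr rfl fun l _ => by ring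
    have hre : T.re ≤ κ * S := by
      calc T.re = ∑ k, ∑ l, (s k * s l) * (star (c k l) * c l k).re := hTre
        _ ≤ ∑ k, ∑ l, (s k * s l) * ((Complex.normSq (c k l) + Complex.normSq (c l k)) / 2) := by
            refine Finset.sum_le_sum fun k _ => Finset.sum_le_sum fun l _ => ?_
            exact mul_le_mul_of_nonneg_left (re_conj_mul_le _ _)
              (mul_nonneg (hsnn k) (hsnn l))
        _ = (∑ k, ∑ l, ((s k * s l) * Complex.normSq (c k l)
              + (s k * s l) * Complex.normSq (c l k))) / 2 := by
            rw [Finset.sum_div]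
            refine Finset.sum_congr rfl fun k _ => ?_
            rw [Finset.sum_div]
            exact Finset.sum_congr rfl fun l _ => by ring
        _ = (∑ k, ∑ l, ((s k * s l) * Complex.normSq (c k l))
              + ∑ k, ∑ l, ((s k * s l) * Complex.normSq (c l k))) / 2 := by
            rw [← Finset.sum_add_distrib]
            congr 1
            exact Finset.sum_congr rfl fun k _ => Finset.sum_add_distrib
        _ = ∑ k, ∑ l, ((s k * s l) * Complex.normSq (c k l)) := by
            rw [h1]; ring
        _ ≤ ∑ k, ∑ l, (κ * Complex.normSq (c k l)) := by
            refine Finset.sum_le_sum fun k _ => Finset.sum_le_sum fun l _ => ?_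
            refine mul_le_mul_of_nonneg_right ?_ (Complex.normSq_nonneg _)
            have hk : s k ≤ s ⟨0, hd⟩ := hmono (by simp [Fin.le_def])
            have hl : s l ≤ s ⟨0, hd⟩ := hmono (by simp [Fin.le_def])
            calc s k * s l ≤ s ⟨0, hd⟩ * s ⟨0, hd⟩ :=
                  mul_le_mul hk hl (hsnn l) (le_trans (hsnn k) hk)
              _ = κ := (sq (s ⟨0, hd⟩)).symm
        _ = κ * ∑ k, ∑ l, Complex.normSq (c k l) := by
            simp [Finset.mul_sum]
        _ ≤ κ * S := mul_le_mul_of_nonneg_left hBessel (sq_nonneg _)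
    -- conclude
    rw [hsplit, hA]
    rw [Complex.le_def]
    constructor
    · simp only [Complex.sub_re, Complex.zero_re, ← Complex.ofReal_mul, Complex.ofReal_re]
      nlinarith [hre]
    · simp only [Complex.sub_im, Complex.zero_im, hTim, ← Complex.ofReal_mul,
        Complex.ofReal_im]
      ring
end
end

section
/- For the reduction witness, ⟨φ|(I − d·P⁺_d)|φ⟩ ≥ 0 for every product unit vector φ = a ⊗ b (i.e. it is a 1-EW candidate), but there exists a unit vector φ of Schmidt rank 2 with ⟨φ|(I − d·P⁺_d)|φ⟩ < 0 whenever d ≥ 2. -/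
open Matrix
open scoped BigOperators

noncomputable section

lemma qform_eq {n : ℕ} (d : ℕ) (ψ φ : Fin n × Fin n → ℂ) :
    qform (1 - (d:ℂ) • ketbra ψ) φ
      = (inn φ φ).re - d * Complex.normSq (inn ψ φ) := by
  have hconj : (starRingEnd ℂ) (inn ψ φ) = ∑ p, star (φ p) * ψ p := by
    rw [inn, map_sum]
    exact Finset.sum_congr rfl fun p _ => by
      simp only [starRingEnd_apply, star_mul', star_star, mul_comm]
  have key : (∑ p, ∑ q, star (φ p) * ((1 - (d:ℂ) • ketbra ψ) p q) * φ q)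
      = (∑ p, star (φ p) * φ p)
        - (d:ℂ) * ((starRingEnd ℂ) (inn ψ φ) * inn ψ φ) := by
    simp only [Matrix.sub_apply, Matrix.smul_apply, Matrix.one_apply, ketbra,
      Matrix.of_apply, smul_eq_mul, mul_sub, sub_mul, Finset.sum_sub_distrib,
      mul_ite, ite_mul, mul_one, mul_zero, zero_mul, Finset.sum_ite_eq,
      Finset.mem_univ, if_true]
    congr 1
    rw [hconj, inn, Finset.sum_mul_sum, Finset.mul_sum]
    apply Finset.sum_congr rfl; intro p _
    rw [Finset.mul_sum]
    apply Finset.sum_congr rfl; intro q _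
    ring
  have hz : (starRingEnd ℂ) (inn ψ φ) * inn ψ φ
      = (Complex.normSq (inn ψ φ) : ℂ) := by
    rw [mul_comm, Complex.mul_conj]
  rw [qform, key, Complex.sub_re]
  congr 1
  rw [hz]
  simp

/-- the reduction witness I − d·P⁺ is nonnegative on all product unit
vectors, but (for d ≥ 2) is negative on some unit vector of Schmidt rank 2. -/
theorem stmt13 {d : ℕ} (hd : 2 ≤ d) :
    let phiPlus : Fin d × Fin d → ℂ := fun p =>
      if p.1 = p.2 then ((Real.sqrt d)⁻¹ : ℝ) else 0
    let W : Matrix (Fin d × Fin d) (Fin d × Fin d) ℂ :=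
      1 - (d : ℂ) • ketbra phiPlus
    (∀ x y : Fin d → ℂ, unitVec (tensVec x y) → 0 ≤ qform W (tensVec x y)) ∧
    ∃ φ : Fin d × Fin d → ℂ, unitVec φ ∧ schmidtRank φ ≤ 2 ∧ qform W φ < 0 := by
  intro phiPlus W
  have hd0 : (0:ℝ) < d := by
    have : 0 < d := by omega
    exact_mod_cast this
  have hr2 : ((Real.sqrt d)⁻¹) * ((Real.sqrt d)⁻¹) = (d:ℝ)⁻¹ := by
    rw [← mul_inv, Real.mul_self_sqrt hd0.le]
  constructor
  · -- positivity on product vectors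
    intro x y hxy
    rw [unitVec] at hxy
    have hW : qform W (tensVec x y)
        = (inn (tensVec x y) (tensVec x y)).re
          - d * Complex.normSq (inn phiPlus (tensVec x y)) :=
      qform_eq d phiPlus (tensVec x y)
    rw [hW, hxy]
    simp only [Complex.one_re]
    -- compute the overlap
    have hip : inn phiPlus (tensVec x y)
        = (((Real.sqrt d)⁻¹ : ℝ) : ℂ) * ∑ i, x i * y i := by
      rw [inn, Fintype.sum_prod_type, Finset.mul_sum]
      apply Finset.sum_congr rfl; intro i _
      simp only [phiPlus, tensVec, apply_ite (star : ℂ → ℂ), star_zero,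
        Complex.star_def, Complex.conj_ofReal, ite_mul, zero_mul,
        Finset.sum_ite_eq, Finset.mem_univ, if_true]
    set S : ℂ := ∑ i, x i * y i with hS
    have h1 : Complex.normSq (inn phiPlus (tensVec x y))
        = (d:ℝ)⁻¹ * Complex.normSq S := by
      rw [hip, Complex.normSq_mul, Complex.normSq_ofReal, hr2]
    -- unit norm gives product of norms = 1
    have htens : inn (tensVec x y) (tensVec x y)
        = (∑ i, star (x i) * x i) * (∑ j, star (y j) * y j) := by
      rw [inn, Fintype.sum_prod_type, Finset.sum_mul_sum]
      apply Finset.sum_congr rfl; intro i _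
      apply Finset.sum_congr rfl; intro j _
      simp only [tensVec, star_mul']
      ring
    have hxy' : (∑ i, ‖x i‖^2) * (∑ i, ‖y i‖^2) = 1 := by
      have hx : (∑ i, star (x i) * x i) = ((∑ i, ‖x i‖^2 : ℝ) : ℂ) := by
        push_cast
        exact Finset.sum_congr rfl fun i _ => by
          rw [mul_comm, Complex.star_def, Complex.mul_conj']
      have hy : (∑ i, star (y i) * y i) = ((∑ i, ‖y i‖^2 : ℝ) : ℂ) := by
        push_cast
        exact Finset.sum_congr rfl fun i _ => by
          rw [mul_comm, Complex.star_def, Complex.mul_conj']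
      rw [htens, hx, hy, ← Complex.ofReal_mul] at hxy
      exact_mod_cast hxy
    -- Cauchy-Schwarz
    have h2 : ‖S‖ ≤ ∑ i, ‖x i‖ * ‖y i‖ := by
      refine (norm_sum_le _ _).trans_eq ?_
      exact Finset.sum_congr rfl fun i _ => norm_mul _ _
    have h3 : ‖S‖^2 ≤ (∑ i, ‖x i‖ * ‖y i‖)^2 :=
      pow_le_pow_left₀ (norm_nonneg _) h2 2
    have h4 := Finset.sum_mul_sq_le_sq_mul_sq Finset.univ
      (fun i => ‖x i‖) (fun i => ‖y i‖)
    have hSle : Complex.normSq S ≤ 1 := by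
      rw [Complex.normSq_eq_norm_sq]
      calc ‖S‖^2 ≤ (∑ i, ‖x i‖ * ‖y i‖)^2 := h3
        _ ≤ (∑ i, ‖x i‖^2) * (∑ i, ‖y i‖^2) := h4
        _ = 1 := hxy'
    have hcanc : (d:ℝ) * ((d:ℝ)⁻¹ * Complex.normSq S) = Complex.normSq S := by
      rw [← mul_assoc, mul_inv_cancel₀ hd0.ne', one_mul]
    rw [h1, hcanc]
    linarith
  · -- the Schmidt rank 2 counterexample
    classical
    set c : ℂ := (((Real.sqrt 2)⁻¹ : ℝ) : ℂ) with hc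
    have hcc : ((Real.sqrt 2)⁻¹ : ℝ) * ((Real.sqrt 2)⁻¹ : ℝ) = 2⁻¹ := by
      rw [← mul_inv, Real.mul_self_sqrt (by norm_num)]
    have hc2 : c * c = (2⁻¹ : ℂ) := by
      rw [hc, ← Complex.ofReal_mul, hcc]
      push_cast
      ring
    have hcne : c ≠ 0 := by
      rw [hc]
      simp only [ne_eq, Complex.ofReal_eq_zero, inv_eq_zero]
      positivity
    set i0 : Fin d := ⟨0, by omega⟩ with hi0
    set i1 : Fin d := ⟨1, by omega⟩ with hi1
    have hne : i0 ≠ i1 := by simp [hi0, hi1, Fin.ext_iff]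
    set w : Fin d → ℂ := fun i => if i = i0 ∨ i = i1 then c else 0 with hw
    set φ : Fin d × Fin d → ℂ := fun p => if p.1 = p.2 then w p.1 else 0 with hφ
    have hsum : ∀ a : ℂ, (∑ i : Fin d, if i = i0 ∨ i = i1 then a else 0) = 2*a := by
      intro a
      have hflt : Finset.univ.filter (fun i : Fin d => i = i0 ∨ i = i1)
          = {i0, i1} := by
        ext i; simp
      rw [← Finset.sum_filter, hflt, Finset.sum_pair hne]
      ring
    have hu : unitVec φ := by
      rw [unitVec, inn, Fintype.sum_prod_type]
      have hdiag : ∀ i : Fin d,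
          (∑ j, star (φ (i, j)) * φ (i, j)) = star (w i) * w i := by
        intro i
        simp only [hφ, apply_ite (star : ℂ → ℂ), star_zero, ite_mul, zero_mul,
          mul_ite, mul_zero, Finset.sum_ite_eq, Finset.mem_univ, if_true]
      simp only [hdiag]
      have hww : ∀ i, star (w i) * w i
          = (if i = i0 ∨ i = i1 then c*c else 0) := by
        intro i
        rw [hw]
        by_cases h : i = i0 ∨ i = i1 <;>
          simp [h, hc, Complex.star_def, Complex.conj_ofReal]
      simp only [hww]
      rw [hsum, hc2]
      norm_num
    have hrank : schmidtRank φ ≤ 2 := by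
      have hdiag : (Matrix.of fun i j => φ (i, j)) = Matrix.diagonal w := by
        ext i j
        simp only [Matrix.of_apply, hφ, Matrix.diagonal_apply]
      rw [schmidtRank, hdiag, Matrix.rank_diagonal, Fintype.card_subtype]
      have hflt : Finset.univ.filter (fun i : Fin d => w i ≠ 0) = {i0, i1} := by
        ext i
        rw [hw]
        by_cases h : i = i0 ∨ i = i1 <;> simp [h, hcne] <;> tauto
      rw [hflt]
      exact (Finset.card_insert_le _ _).trans (by simp)
    refine ⟨φ, hu, hrank, ?_⟩
    have hW : qform W φ
        = (inn φ φ).re - d * Complex.normSq (inn phiPlus φ) :=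
      qform_eq d phiPlus φ
    rw [unitVec] at hu
    rw [hW, hu]
    simp only [Complex.one_re]
    have hip : inn phiPlus φ = (((Real.sqrt d)⁻¹ : ℝ) : ℂ) * (2 * c) := by
      rw [inn, Fintype.sum_prod_type]
      have hdiag : ∀ i : Fin d,
          (∑ j, star (phiPlus (i, j)) * φ (i, j))
            = (((Real.sqrt d)⁻¹ : ℝ) : ℂ) * w i := by
        intro i
        simp only [phiPlus, hφ, apply_ite (star : ℂ → ℂ), star_zero,
          Complex.star_def, Complex.conj_ofReal, ite_mul, zero_mul, mul_ite,
          mul_zero, Finset.sum_ite_eq, Finset.mem_univ, if_true]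
      simp only [hdiag]
      rw [← Finset.mul_sum]
      congr 1
      rw [hw]
      exact hsum c
    have hnr : Complex.normSq (inn phiPlus φ) = 2 / d := by
      rw [hip, Complex.normSq_mul, Complex.normSq_ofReal, hr2,
        Complex.normSq_mul, hc, Complex.normSq_ofReal, hcc]
      have : Complex.normSq 2 = 4 := by norm_num [Complex.normSq]
      rw [this]
      field_simp
      ring
    rw [hnr]
    have : (d:ℝ) * (2/d) = 2 := by field_simp
    rw [this]
    norm_num
end
end

section
/- The partial transpose of W[a,b,c] is positive semidefinite if and only if a ≥ 0, b, c ≥ 0 and bc ≥ 1. -/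
open Matrix
open scoped BigOperators ComplexOrder

noncomputable section

/-- The Choi-type operator W[a,b,c] on C³⊗C³: diagonal a on |ii⟩, b on |12⟩,|23⟩,|31⟩,
c on |13⟩,|21⟩,|32⟩, and −1 coupling |ii⟩⟨jj| for i ≠ j. -/
def Wabc (a b c : ℝ) : Matrix (Fin 3 × Fin 3) (Fin 3 × Fin 3) ℂ :=
  Matrix.of fun p q =>
    if p.1 = p.2 ∧ q.1 = q.2 then (if p.1 = q.1 then (a : ℂ) else -1)
    else if p = q then
      (if (p.2 : ℕ) = ((p.1 : ℕ) + 1) % 3 then (b : ℂ) else (c : ℂ))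
    else 0



lemma blockReal17 {b c t s : ℝ} (hc : 0 ≤ c) (hbc : 1 ≤ b * c) :
    2 * (t * s) ≤ b * t ^ 2 + c * s ^ 2 := by
  have hbpos : 0 < b := by nlinarith
  nlinarith [sq_nonneg (b * t - s), mul_pos hbpos hbpos]

lemma blockC17 {b c : ℝ} (hb : 0 ≤ b) (hc : 0 ≤ c) (hbc : 1 ≤ b * c) (u v : ℂ) :
    0 ≤ (b:ℂ) * (star u * u) + (c:ℂ) * (star v * v) - star u * v - star v * u := by
  have e3 : star u * v + star v * u = ((2 * (star u * v).re : ℝ) : ℂ) := by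
    have : star v * u = (starRingEnd ℂ) (star u * v) := by simp [mul_comm]
    rw [this, Complex.add_conj]
  have key : (b:ℂ) * (star u * u) + (c:ℂ) * (star v * v) - star u * v - star v * u
      = ((b * Complex.normSq u + c * Complex.normSq v - 2 * (star u * v).re : ℝ) : ℂ) := by
    push_cast
    rw [Complex.normSq_eq_conj_mul_self, Complex.normSq_eq_conj_mul_self]
    have := e3
    push_cast at this
    simp only [Complex.star_def] at this ⊢
    linear_combination -this
  rw [key, Complex.zero_le_real]
  have h1 : (star u * v).re ≤ ‖u‖ * ‖v‖ := by
    calc (star u * v).re ≤ ‖star u * v‖ := Complex.re_le_norm _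
    _ = ‖u‖ * ‖v‖ := by
        rw [norm_mul]; simp [Complex.star_def, Complex.norm_conj]
  have h2 := blockReal17 (b := b) (t := ‖u‖) (s := ‖v‖) hc hbc
  rw [Complex.sq_norm, Complex.sq_norm] at h2
  linarith

set_option maxHeartbeats 1000000 in
lemma herm17 (a b c : ℝ) : (partialTranspose (Wabc a b c)).IsHermitian := by
  ext ⟨i, j⟩ ⟨k, l⟩
  simp only [Matrix.conjTranspose_apply, partialTranspose, Wabc, Matrix.of_apply]
  fin_cases i <;> fin_cases j <;> fin_cases k <;> fin_cases l <;>
    simp [Prod.ext_iff]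

set_option maxHeartbeats 1000000 in
lemma quad17 (a b c : ℝ) (x : Fin 3 × Fin 3 → ℂ) :
    star x ⬝ᵥ (partialTranspose (Wabc a b c)) *ᵥ x =
      (a:ℂ) * (star (x (0,0)) * x (0,0) + star (x (1,1)) * x (1,1) + star (x (2,2)) * x (2,2))
      + ((b:ℂ) * (star (x (0,1)) * x (0,1)) + (c:ℂ) * (star (x (1,0)) * x (1,0))
          - star (x (0,1)) * x (1,0) - star (x (1,0)) * x (0,1))
      + ((b:ℂ) * (star (x (1,2)) * x (1,2)) + (c:ℂ) * (star (x (2,1)) * x (2,1))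
          - star (x (1,2)) * x (2,1) - star (x (2,1)) * x (1,2))
      + ((b:ℂ) * (star (x (2,0)) * x (2,0)) + (c:ℂ) * (star (x (0,2)) * x (0,2))
          - star (x (2,0)) * x (0,2) - star (x (0,2)) * x (2,0)) := by
  simp only [dotProduct, mulVec, Fintype.sum_prod_type, Fin.sum_univ_three,
    partialTranspose, Wabc, Matrix.of_apply, Pi.star_apply, Prod.mk.injEq,
    Fin.isValue, Fin.reduceEq, Nat.reduceMod, Nat.reduceEqDiff, Fin.val_zero,
    Fin.val_one, Fin.val_two, Nat.reduceAdd, and_true, true_and, and_false,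
    false_and, and_self, if_true, if_false, reduceIte, mul_zero, add_zero, zero_add,
    mul_one, mul_neg]
  ring

/-- W[a,b,c]^Γ ≥ 0 if and only if a ≥ 0, b, c ≥ 0 and bc ≥ 1. -/
theorem stmt17 (a b c : ℝ) :
    (partialTranspose (Wabc a b c)).PosSemidef ↔
      0 ≤ a ∧ 0 ≤ b ∧ 0 ≤ c ∧ 1 ≤ b * c := by
  
  constructor
  · intro h
    have key : ∀ t s : ℝ, 0 ≤ b * t ^ 2 + c * s ^ 2 - 2 * (t * s) := by
      intro t s
      have h' := (Matrix.posSemidef_iff_dotProduct_mulVec.mp h).2 (fun p => if p = ((0:Fin 3),(1:Fin 3)) then (t:ℂ)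
        else if p = ((1:Fin 3),(0:Fin 3)) then (s:ℂ) else 0)
      rw [quad17] at h'
      simp (config := { decide := true }) only [Prod.mk.injEq, if_true, if_false,
        reduceIte, mul_zero, zero_mul, mul_one, sub_zero, zero_sub, add_zero, zero_add,
        map_zero, star_zero] at h'
      have e : (b:ℂ) * (star (t:ℂ) * ↑t) + (c:ℂ) * (star (s:ℂ) * ↑s)
          - star (t:ℂ) * ↑s - star (s:ℂ) * ↑t
          = ((b * t ^ 2 + c * s ^ 2 - 2 * (t * s) : ℝ) : ℂ) := by
        simp only [Complex.star_def, Complex.conj_ofReal]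
        push_cast
        ring
      rw [e, Complex.zero_le_real] at h'
      exact h'
    have ha : 0 ≤ a := by
      have h' := (Matrix.posSemidef_iff_dotProduct_mulVec.mp h).2 (fun p => if p = ((0:Fin 3),(0:Fin 3)) then (1:ℂ) else 0)
      rw [quad17] at h'
      simp (config := { decide := true }) only [Prod.mk.injEq, if_true, if_false,
        reduceIte, mul_zero, zero_mul, mul_one, sub_zero, zero_sub, add_zero, zero_add,
        map_zero, star_zero, _root_.map_one, star_one] at h'
      exact_mod_cast h'
    have hb : 0 ≤ b := by have := key 1 0; nlinarith
    have hc : 0 ≤ c := by have := key 0 1; nlinarith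
    refine ⟨ha, hb, hc, ?_⟩
    by_contra hlt
    push_neg at hlt
    have hc0 : c ≤ 0 := by nlinarith [key c 1]
    have hb0 : b ≤ 0 := by nlinarith [key 1 b]
    nlinarith [key 1 1]
  · rintro ⟨ha, hb, hc, hbc⟩
    refine Matrix.posSemidef_iff_dotProduct_mulVec.mpr ⟨herm17 a b c, fun x => ?_⟩
    rw [quad17]
    have hA : (0:ℂ) ≤ (a:ℂ) * (star (x (0,0)) * x (0,0) + star (x (1,1)) * x (1,1)
        + star (x (2,2)) * x (2,2)) := by
      refine mul_nonneg (Complex.zero_le_real.mpr ha) ?_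
      exact add_nonneg (add_nonneg (star_mul_self_nonneg _) (star_mul_self_nonneg _))
        (star_mul_self_nonneg _)
    exact add_nonneg (add_nonneg (add_nonneg hA (blockC17 hb hc hbc _ _))
      (blockC17 hb hc hbc _ _)) (blockC17 hb hc hbc _ _)
end
end

section
/- Define the map Λ(X) = κ·Tr(X)·I − F X F† from d_A×d_A matrices to d_B×d_B matrices, where F: C^{d_A} → C^{d_B} satisfies ‖F‖_op² ≤ κ (operator norm). Then Λ ∘ T is completely positive (Λ is completely co-positive); equivalently the Choi matrix of Λ ∘ T is positive semidefinite. -/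
open Matrix
open scoped BigOperators ComplexOrder

noncomputable section

lemma re_lb (a b : ℂ) : -((Complex.normSq a + Complex.normSq b)/2) ≤ (star a * b).re := by
  simp only [Complex.normSq_apply, Complex.mul_re, Complex.star_def, Complex.conj_re,
    Complex.conj_im]
  nlinarith [sq_nonneg (a.re + b.re), sq_nonneg (a.im + b.im)]

lemma adj_bound {dA dB : ℕ} (κ : ℝ) (F : Matrix (Fin dB) (Fin dA) ℂ)
    (hκ : 0 ≤ κ)
    (hF : ∀ x : Fin dA → ℂ,
      ∑ m, Complex.normSq (F.mulVec x m) ≤ κ * ∑ i, Complex.normSq (x i))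
    (y : Fin dB → ℂ) :
    ∑ j, Complex.normSq (∑ m, star (F m j) * y m) ≤ κ * ∑ m, Complex.normSq (y m) := by
  set u : Fin dA → ℂ := fun j => ∑ m, star (F m j) * y m with hu
  set N : ℝ := ∑ j, Complex.normSq (u j) with hN
  set Sy : ℝ := ∑ m, Complex.normSq (y m) with hSy
  have hN0 : 0 ≤ N := Finset.sum_nonneg fun _ _ => Complex.normSq_nonneg _
  have hSy0 : 0 ≤ Sy := Finset.sum_nonneg fun _ _ => Complex.normSq_nonneg _
  have hstar : ∀ j, star (u j) = ∑ m, star (y m) * F m j := by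
    intro j; simp only [hu, star_sum, StarMul.star_mul, star_star]
  have key : (N : ℂ) = ∑ m, star (y m) * F.mulVec u m := by
    rw [hN]
    push_cast
    calc ∑ j, (Complex.normSq (u j) : ℂ)
        = ∑ j, u j * star (u j) := by
          refine Finset.sum_congr rfl fun j _ => ?_
          rw [← Complex.mul_conj]; rfl
      _ = ∑ j, ∑ m, star (y m) * (F m j * u j) := by
          refine Finset.sum_congr rfl fun j _ => ?_
          rw [hstar, Finset.mul_sum]
          exact Finset.sum_congr rfl fun m _ => by ring
      _ = ∑ m, ∑ j, star (y m) * (F m j * u j) := Finset.sum_comm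
      _ = ∑ m, star (y m) * F.mulVec u m := by
          refine Finset.sum_congr rfl fun m _ => ?_
          rw [Matrix.mulVec, dotProduct, Finset.mul_sum]
  have habs : N ≤ ∑ m, ‖y m‖ * ‖F.mulVec u m‖ := by
    have hre : N = (∑ m, star (y m) * F.mulVec u m).re := by
      rw [← key]; simp
    rw [hre, Complex.re_sum]
    refine Finset.sum_le_sum fun m _ => ?_
    calc (star (y m) * F.mulVec u m).re ≤ ‖star (y m) * F.mulVec u m‖ :=
          Complex.re_le_norm _
      _ = ‖y m‖ * ‖F.mulVec u m‖ := by
          rw [norm_mul]; simp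
  have hcs : (∑ m, ‖y m‖ * ‖F.mulVec u m‖)^2 ≤ Sy * (κ * N) := by
    calc (∑ m, ‖y m‖ * ‖F.mulVec u m‖)^2
        ≤ (∑ m, ‖y m‖^2) * ∑ m, ‖F.mulVec u m‖^2 :=
          Finset.sum_mul_sq_le_sq_mul_sq _ _ _
      _ = Sy * ∑ m, Complex.normSq (F.mulVec u m) := by
          simp only [Complex.sq_norm, hSy]
      _ ≤ Sy * (κ * N) := mul_le_mul_of_nonneg_left (hF u) hSy0
  have hS0 : 0 ≤ ∑ m, ‖y m‖ * ‖F.mulVec u m‖ :=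
    Finset.sum_nonneg fun _ _ => mul_nonneg (norm_nonneg _) (norm_nonneg _)
  have hNN : N * N ≤ Sy * (κ * N) := by nlinarith
  rcases eq_or_lt_of_le hN0 with h | h
  · rw [← h]; positivity
  · have := le_of_mul_le_mul_right (by linarith : N * N ≤ (κ * Sy) * N) h
    linarith
open scoped BigOperators ComplexOrder

noncomputable section

lemma re_ub (a b : ℂ) : (star a * b).re ≤ (Complex.normSq a + Complex.normSq b)/2 := by
  simp only [Complex.normSq_apply, Complex.mul_re, Complex.star_def, Complex.conj_re,
    Complex.conj_im]
  nlinarith [sq_nonneg (a.re - b.re), sq_nonneg (a.im - b.im)]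

theorem stmt18' {dA dB : ℕ} (κ : ℝ) (F : Matrix (Fin dB) (Fin dA) ℂ)
    (hκ : 0 ≤ κ)
    (hAB : ∀ y : Fin dB → ℂ,
      ∑ j, Complex.normSq (∑ m, star (F m j) * y m) ≤ κ * ∑ m, Complex.normSq (y m)) :
    (Matrix.of fun (p q : Fin dA × Fin dB) =>
      (if p.1 = q.1 then ((κ : ℝ) : ℂ) else 0) * (if p.2 = q.2 then 1 else 0)
        - F p.2 q.1 * star (F q.2 p.1)).PosSemidef := by
  rw [posSemidef_iff_dotProduct_mulVec]
  constructor
  · ext p q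
    simp only [Matrix.conjTranspose_apply, Matrix.of_apply, star_sub, StarMul.star_mul,
      star_star, apply_ite (star : ℂ → ℂ), star_one, star_zero, Complex.star_def,
      Complex.conj_ofReal]
    by_cases h : p.1 = q.1 <;> by_cases h2 : p.2 = q.2 <;>
      simp [h, h2, eq_comm, mul_comm]
  · intro x
    set C : Fin dA → Fin dA → ℂ := fun i j => ∑ m, star (F m j) * x (i, m) with hC
    have hCstar : ∀ i j, star (C i j) = ∑ m, F m j * star (x (i, m)) := by
      intro i j
      simp only [hC, star_sum, StarMul.star_mul, star_star]
      exact Finset.sum_congr rfl fun m _ => mul_comm _ _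
    set T : ℂ := ∑ i, ∑ j, star (C i j) * C j i with hT
    have hT2 : T = ∑ i, ∑ m, ∑ q : Fin dA × Fin dB,
        star (x (i, m)) * (F m q.1 * (star (F q.2 i) * x q)) := by
      rw [hT]
      calc ∑ i, ∑ j, star (C i j) * C j i
          = ∑ i, ∑ j, ∑ m, ∑ n, star (x (i,m)) * (F m j * (star (F n i) * x (j,n))) := by
            refine Finset.sum_congr rfl fun i _ => Finset.sum_congr rfl fun j _ => ?_
            rw [hCstar]
            simp only [hC]
            rw [Finset.sum_mul_sum]
            exact Finset.sum_congr rfl fun m _ => Finset.sum_congr rfl fun n _ => by ring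
        _ = ∑ i, ∑ m, ∑ j, ∑ n, star (x (i,m)) * (F m j * (star (F n i) * x (j,n))) :=
            Finset.sum_congr rfl fun i _ => Finset.sum_comm
        _ = ∑ i, ∑ m, ∑ q : Fin dA × Fin dB,
              star (x (i, m)) * (F m q.1 * (star (F q.2 i) * x q)) := by
            refine Finset.sum_congr rfl fun i _ => Finset.sum_congr rfl fun m _ => ?_
            rw [Fintype.sum_prod_type]
    have hz : star x ⬝ᵥ ((Matrix.of fun (p q : Fin dA × Fin dB) =>
        (if p.1 = q.1 then ((κ : ℝ) : ℂ) else 0) * (if p.2 = q.2 then 1 else 0)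
          - F p.2 q.1 * star (F q.2 p.1)).mulVec x)
        = ((κ * ∑ p, Complex.normSq (x p) : ℝ) : ℂ) - T := by
      rw [dotProduct]
      have expand : ∀ p : Fin dA × Fin dB,
          star x p * ((Matrix.of fun (p q : Fin dA × Fin dB) =>
            (if p.1 = q.1 then ((κ : ℝ) : ℂ) else 0) * (if p.2 = q.2 then 1 else 0)
              - F p.2 q.1 * star (F q.2 p.1)).mulVec x) p
          = ((κ : ℝ) : ℂ) * (star (x p) * x p)
            - ∑ q, star (x p) * (F p.2 q.1 * (star (F q.2 p.1) * x q)) := by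
        intro p
        rw [Matrix.mulVec, dotProduct]
        simp only [Matrix.of_apply, Pi.star_apply, sub_mul, mul_sub, Finset.mul_sum,
          Finset.sum_sub_distrib]
        congr 1
        · rw [Fintype.sum_prod_type]
          simp only [mul_ite, mul_one, mul_zero, ite_mul, zero_mul, one_mul]
          simp only [Finset.sum_ite_eq, Finset.mem_univ, if_true]
          ring
        · exact Finset.sum_congr rfl fun q _ => by ring
      rw [Finset.sum_congr rfl fun p _ => expand p, Finset.sum_sub_distrib]
      congr 1
      · push_cast
        rw [Finset.mul_sum]
        refine Finset.sum_congr rfl fun p _ => ?_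
        rw [Complex.star_def, ← Complex.normSq_eq_conj_mul_self]
      · rw [Fintype.sum_prod_type, hT2]
    rw [hz, Complex.le_def]
    have hTconj : (starRingEnd ℂ) T = T := by
      rw [hT]
      calc (starRingEnd ℂ) (∑ i, ∑ j, star (C i j) * C j i)
          = ∑ i, ∑ j, star (C j i) * C i j := by
            simp only [map_sum]
            refine Finset.sum_congr rfl fun i _ => Finset.sum_congr rfl fun j _ => ?_
            rw [← Complex.star_def, StarMul.star_mul, star_star]
        _ = ∑ j, ∑ i, star (C j i) * C i j := Finset.sum_comm
    have hTim : T.im = 0 := Complex.conj_eq_iff_im.mp hTconj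
    have hCbd : ∀ i : Fin dA, ∑ j, Complex.normSq (C i j) ≤ κ * ∑ m, Complex.normSq (x (i, m)) := by
      intro i
      simpa only [hC] using hAB (fun m => x (i, m))
    have hTre : T.re ≤ κ * ∑ p, Complex.normSq (x p) := by
      have h1 : T.re ≤ ∑ i, ∑ j, (Complex.normSq (C i j) + Complex.normSq (C j i))/2 := by
        rw [hT, Complex.re_sum]
        refine Finset.sum_le_sum fun i _ => ?_
        rw [Complex.re_sum]
        exact Finset.sum_le_sum fun j _ => re_ub _ _
      have h2 : ∑ i, ∑ j, (Complex.normSq (C i j) + Complex.normSq (C j i))/2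
          = ∑ i, ∑ j, Complex.normSq (C i j) := by
        simp only [add_div, Finset.sum_add_distrib, Finset.sum_div]
        have : ∑ i, ∑ j, Complex.normSq (C j i)/2 = ∑ i, ∑ j, Complex.normSq (C i j)/2 :=
          Finset.sum_comm
        rw [this, ← Finset.sum_add_distrib]
        refine Finset.sum_congr rfl fun i _ => ?_
        rw [← Finset.sum_add_distrib]
        exact Finset.sum_congr rfl fun j _ => by ring
      have h3 : ∑ i, ∑ j, Complex.normSq (C i j) ≤ κ * ∑ p, Complex.normSq (x p) := by
        calc ∑ i, ∑ j, Complex.normSq (C i j)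
            ≤ ∑ i, κ * ∑ m, Complex.normSq (x (i, m)) := Finset.sum_le_sum fun i _ => hCbd i
          _ = κ * ∑ p, Complex.normSq (x p) := by
              rw [Fintype.sum_prod_type, Finset.mul_sum]
      linarith
    constructor
    · simp only [Complex.zero_re, Complex.sub_re, Complex.ofReal_re]
      linarith
    · simp [hTim]

/-- if ‖F‖_op² ≤ κ then the map Λ(X) = κ·Tr(X)·I − F X F† is completely
co-positive: the Choi matrix of Λ ∘ T is positive semidefinite. -/
theorem stmt18 {dA dB : ℕ} (κ : ℝ) (F : Matrix (Fin dB) (Fin dA) ℂ)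
    (hF : ∀ x : Fin dA → ℂ,
      ∑ m, Complex.normSq (F.mulVec x m) ≤ κ * ∑ i, Complex.normSq (x i)) :
    (Matrix.of fun (p q : Fin dA × Fin dB) =>
      (if p.1 = q.1 then ((κ : ℝ) : ℂ) else 0) * (if p.2 = q.2 then 1 else 0)
        - F p.2 q.1 * star (F q.2 p.1)).PosSemidef := by
  rcases Nat.eq_zero_or_pos dA with h0 | hpos
  · subst h0
    rw [posSemidef_iff_dotProduct_mulVec]
    constructor
    · ext p q; exact p.1.elim0
    · intro x
      simp [dotProduct, Finset.univ_eq_empty]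
  · have hκ : 0 ≤ κ := by
      have h := hF (Pi.single ⟨0, hpos⟩ 1)
      have h1 : ∑ i, Complex.normSq ((Pi.single (⟨0, hpos⟩ : Fin dA) 1 : Fin dA → ℂ) i) = 1 := by
        simp [Pi.single_apply, apply_ite Complex.normSq]
      rw [h1, mul_one] at h
      have h2 : (0:ℝ) ≤ ∑ m, Complex.normSq (F.mulVec (Pi.single ⟨0, hpos⟩ 1) m) :=
        Finset.sum_nonneg fun _ _ => Complex.normSq_nonneg _
      linarith
    exact stmt18' κ F hκ (adj_bound κ F hκ hF)
end
end
end
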